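/- arXiv:1901.08812 — 8 statements merged into one kernel-verified Lean document; each statement's English description precedes it below -/
import Mathlib

section
/- Let A be a C*-algebra, let ε > 0, and let a, b be positive elements of A with ‖a - b‖ < ε. Then (a - ε)₊ is Cuntz subequivalent to b. -/
open Filter Topology

/-- Cuntz subequivalence: `a ≾ b` iff some sequence `vₙ b vₙ*` converges to `a`. -/
def CuntzSubeq {R : Type*} [Mul R] [Star R] [TopologicalSpace R] (a b : R) : Prop :=
  ∃ v : ℕ → R, Tendsto (fun n => v n * b * star (v n)) atTop (𝓝 a)

/-- `(a - ε)₊`, via the continuous functional calculus applied to `t ↦ max (t - ε) 0`. -/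
noncomputable def cutoff {A : Type*} [NonUnitalRing A] [StarRing A] [Module ℝ A]
    [SMulCommClass ℝ A A] [IsScalarTower ℝ A A] [TopologicalSpace A]
    [NonUnitalContinuousFunctionalCalculus ℝ A (IsSelfAdjoint : A → Prop)]
    (ε : ℝ) (a : A) : A :=
  cfcₙ (fun t : ℝ => max (t - ε) 0) a

/-!
Put `r = ‖a - b‖ < ε` and `h(t) = √((t - ε)₊ / max (t - r) (ε - r))`, so that
`h(t)² (t - r) = (t - ε)₊`. With `c = h(a)` this gives `(a - ε)₊ = c (a - r) c ≤ c b c`, because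
`a - r ≤ b`, and `c b c ≾ b` trivially. It remains to see that `y ≤ z` implies `y ≾ z`. In the
unitization put `d = (z + t)^(-1/2)`, so that `d z d = 1 - t d²`; for `s = y^(1/2)` this gives
`‖(s d) z (s d)* - y‖ = t ‖d y d‖ ≤ t ‖d z d‖ ≤ t`, and `s d` lies in `A` since `A` is an ideal of
its unitization.
-/

theorem CuntzSubeq.of_mul_mul_star {R : Type*} [Semigroup R] [StarMul R] [TopologicalSpace R]
    {a b c : R} (h : CuntzSubeq a (c * b * star c)) : CuntzSubeq a b := by
  obtain ⟨v, hv⟩ := h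
  refine ⟨fun n => v n * c, ?_⟩
  simpa only [star_mul, mul_assoc] using hv

section Unital

variable {M : Type*} [CStarAlgebra M]

noncomputable def shiftedInvSqrt (t : ℝ) (z : M) : M :=
  cfc (fun s : ℝ => √((s + t)⁻¹)) z

variable {t : ℝ} {z : M}

lemma isSelfAdjoint_shiftedInvSqrt : IsSelfAdjoint (shiftedInvSqrt t z) :=
  cfc_predicate _ _

variable [PartialOrder M] [StarOrderedRing M]

lemma shiftedInvSqrt_mul_mul_self (hz : 0 ≤ z) (ht : 0 < t) :
    shiftedInvSqrt t z * z * shiftedInvSqrt t z =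
      1 - t • (shiftedInvSqrt t z * shiftedInvSqrt t z) := by
  have hpos : ∀ s ∈ spectrum ℝ z, 0 < s + t := fun s hs => by
    have := spectrum_nonneg_of_nonneg hz hs; linarith
  have hg : ContinuousOn (fun s : ℝ => √((s + t)⁻¹)) (spectrum ℝ z) :=
    ((continuousOn_id.add continuousOn_const).inv₀ fun s hs => (hpos s hs).ne').sqrt
  have hsq : ∀ s ∈ spectrum ℝ z, √((s + t)⁻¹) * √((s + t)⁻¹) = (s + t)⁻¹ := fun s hs =>
    Real.mul_self_sqrt (inv_nonneg.mpr (hpos s hs).le)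
  calc shiftedInvSqrt t z * z * shiftedInvSqrt t z
      = cfc (fun s : ℝ => √((s + t)⁻¹) * s * √((s + t)⁻¹)) z := by
        rw [cfc_mul (fun s : ℝ => √((s + t)⁻¹) * s) _ z (hg.mul continuousOn_id) hg,
          cfc_mul _ (fun s : ℝ => s) z hg continuousOn_id, cfc_id' ℝ z]
        rfl
    _ = cfc (fun s : ℝ => 1 - t • (√((s + t)⁻¹) * √((s + t)⁻¹))) z := by
        refine cfc_congr fun s hs => ?_
        rw [mul_right_comm, hsq s hs, smul_eq_mul]
        field_simp [(hpos s hs).ne']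
        ring
    _ = 1 - t • (shiftedInvSqrt t z * shiftedInvSqrt t z) := by
        rw [cfc_sub (fun _ : ℝ => 1) (fun s : ℝ => t • (√((s + t)⁻¹) * √((s + t)⁻¹))) z
            continuousOn_const ((hg.mul hg).const_smul t), cfc_const_one ℝ z,
          cfc_smul t (fun s : ℝ => √((s + t)⁻¹) * √((s + t)⁻¹)) z, cfc_mul _ _ z hg hg]
        rfl

lemma norm_shiftedInvSqrt_mul_mul_self_le_one (hz : 0 ≤ z) (ht : 0 < t) :
    ‖shiftedInvSqrt t z * z * shiftedInvSqrt t z‖ ≤ 1 := by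
  set d := shiftedInvSqrt t z
  have hd : IsSelfAdjoint d := isSelfAdjoint_shiftedInvSqrt
  have hdzd : 0 ≤ d * z * d := by simpa only [hd.star_eq] using star_left_conjugate_nonneg hz d
  have hdd : 0 ≤ t • (d * d) :=
    smul_nonneg ht.le (by simpa only [hd.star_eq] using star_mul_self_nonneg d)
  rw [CStarAlgebra.norm_le_one_iff_of_nonneg _ hdzd, shiftedInvSqrt_mul_mul_self hz ht]
  exact sub_le_self 1 hdd

lemma norm_mul_shiftedInvSqrt_conj_sub_le {s : M} (hsz : star s * s ≤ z) (ht : 0 < t) :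
    ‖(s * shiftedInvSqrt t z) * z * star (s * shiftedInvSqrt t z) - s * star s‖ ≤ t := by
  set d := shiftedInvSqrt t z
  have hd : IsSelfAdjoint d := isSelfAdjoint_shiftedInvSqrt
  have hz : 0 ≤ z := (star_mul_self_nonneg s).trans hsz
  have hdiff : (s * d) * z * star (s * d) - s * star s = -(t • ((s * d) * star (s * d))) := by
    calc (s * d) * z * star (s * d) - s * star s
        = s * (d * z * d) * star s - s * star s := by
          rw [star_mul, hd.star_eq]; noncomm_ring
      _ = -(t • ((s * d) * star (s * d))) := by
          rw [shiftedInvSqrt_mul_mul_self hz ht, star_mul, hd.star_eq]; noncomm_ring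
  have hconj : ‖(s * d) * star (s * d)‖ ≤ ‖d * z * d‖ := by
    rw [CStarRing.norm_self_mul_star, ← CStarRing.norm_star_mul_self, star_mul, hd.star_eq,
      ← mul_assoc, mul_assoc d]
    refine CStarAlgebra.norm_le_norm_of_nonneg_of_le ?_ ?_
    · simpa only [hd.star_eq] using star_left_conjugate_nonneg (star_mul_self_nonneg s) d
    · simpa only [hd.star_eq] using star_left_conjugate_le_conjugate hsz d
  calc ‖(s * d) * z * star (s * d) - s * star s‖ = t * ‖(s * d) * star (s * d)‖ := by
        rw [hdiff, norm_neg, norm_smul, Real.norm_of_nonneg ht.le]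
    _ ≤ t * 1 := by
        gcongr
        exact hconj.trans (norm_shiftedInvSqrt_mul_mul_self_le_one hz ht)
    _ = t := mul_one t

lemma tendsto_mul_shiftedInvSqrt_conj {s : M} (hsz : star s * s ≤ z) :
    Tendsto (fun n : ℕ => (s * shiftedInvSqrt (n + 1 : ℝ)⁻¹ z) * z *
      star (s * shiftedInvSqrt (n + 1 : ℝ)⁻¹ z)) atTop (𝓝 (s * star s)) := by
  rw [tendsto_iff_norm_sub_tendsto_zero]
  refine squeeze_zero (fun _ => norm_nonneg _)
    (fun n => norm_mul_shiftedInvSqrt_conj_sub_le hsz (by positivity)) ?_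
  simpa only [one_div] using tendsto_one_div_add_atTop_nhds_zero_nat (𝕜 := ℝ)

end Unital

lemma Unitization.inr_mul_eq_inr {R A : Type*} [Semiring R] [NonUnitalSemiring A] [Module R A]
    (x : A) (u : Unitization R A) : (x : Unitization R A) * u = ↑(x * u.snd + u.fst • x) := by
  ext <;> simp [add_comm]

section NonUnital

open scoped CStarAlgebra

variable {A : Type*} [NonUnitalCStarAlgebra A] [PartialOrder A] [StarOrderedRing A]

theorem CuntzSubeq.mul_star_of_star_mul_le {s z : A} (h : star s * s ≤ z) :
    CuntzSubeq (s * star s) z := by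
  have hz : IsSelfAdjoint z := .of_nonneg ((star_mul_self_nonneg s).trans h)
  have h' : star (s : A⁺¹) * s ≤ z := by
    rwa [← Unitization.inr_star, ← Unitization.inr_mul,
      Unitization.inr_le_iff _ _ (.star_mul_self s) hz]
  set d : ℕ → A⁺¹ := fun n => shiftedInvSqrt (n + 1 : ℝ)⁻¹ (z : A⁺¹)
  refine ⟨fun n => s * (d n).snd + (d n).fst • s, ?_⟩
  rw [(Unitization.isometry_inr (𝕜 := ℂ)).isEmbedding.tendsto_nhds_iff]
  convert tendsto_mul_shiftedInvSqrt_conj h' using 2 with n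
  · simp only [Function.comp_apply, Unitization.inr_mul ℂ, Unitization.inr_star,
      ← Unitization.inr_mul_eq_inr, d]
  · rw [Unitization.inr_mul ℂ, Unitization.inr_star]

theorem CuntzSubeq.of_le {y z : A} (hy : 0 ≤ y) (hyz : y ≤ z) : CuntzSubeq y z := by
  set s := CFC.sqrt y
  have hs : star s = s := (CFC.sqrt_nonneg y).isSelfAdjoint.star_eq
  have hss : s * s = y := CFC.sqrt_mul_sqrt_self y hy
  simpa only [hs, hss] using CuntzSubeq.mul_star_of_star_mul_le (s := s) (by rwa [hs, hss])

end NonUnital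

section Cutoff

variable {r ε : ℝ}

noncomputable def cutoffFactor (r ε : ℝ) (t : ℝ) : ℝ :=
  √(max (t - ε) 0 / max (t - r) (ε - r))

lemma continuous_cutoffFactor (hrε : r < ε) : Continuous (cutoffFactor r ε) :=
  ((by fun_prop : Continuous fun t : ℝ => max (t - ε) 0).div (by fun_prop)
    fun t => ((sub_pos.mpr hrε).trans_le (le_max_right _ _)).ne').sqrt

lemma cutoffFactor_zero (hε : 0 ≤ ε) : cutoffFactor r ε 0 = 0 := by
  simp [cutoffFactor, hε]

lemma cutoffFactor_mul_self_mul (hrε : r < ε) (t : ℝ) :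
    cutoffFactor r ε t * cutoffFactor r ε t * (t - r) = max (t - ε) 0 := by
  rcases le_or_gt t ε with htε | hεt
  · simp [cutoffFactor, htε]
  · have htr : 0 < t - r := by linarith
    rw [cutoffFactor, max_eq_left (sub_nonneg.mpr hεt.le), max_eq_left (by linarith),
      Real.mul_self_sqrt (div_nonneg (by linarith) htr.le)]
    field_simp

variable {A : Type*} [NonUnitalCStarAlgebra A]

lemma cutoff_eq_conj_sub {a : A} (ha : IsSelfAdjoint a) (hε : 0 ≤ ε) (hrε : r < ε) :
    cutoff ε a = cfcₙ (cutoffFactor r ε) a * a * cfcₙ (cutoffFactor r ε) a -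
      r • (cfcₙ (cutoffFactor r ε) a * cfcₙ (cutoffFactor r ε) a) := by
  set h := cutoffFactor r ε
  have hh : Continuous h := continuous_cutoffFactor hrε
  have hh0 : h 0 = 0 := cutoffFactor_zero hε
  calc cutoff ε a = cfcₙ (fun t => h t * t * h t - r • (h t * h t)) a :=
        cfcₙ_congr fun t _ => by rw [← cutoffFactor_mul_self_mul hrε t, smul_eq_mul]; ring
    _ = _ := by
        rw [cfcₙ_sub (fun t => h t * t * h t) (fun t => r • (h t * h t)) a, cfcₙ_smul r _ a,
          cfcₙ_mul (fun t => h t * t) h a, cfcₙ_mul h (fun t => t) a, cfcₙ_id' ℝ a,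
          cfcₙ_mul h h a]

variable [PartialOrder A] [StarOrderedRing A]

lemma cutoff_le_conj_of_norm_sub_lt {a b : A} (ha : IsSelfAdjoint a) (hb : IsSelfAdjoint b)
    (hab : ‖a - b‖ < ε) :
    cutoff ε a ≤ cfcₙ (cutoffFactor ‖a - b‖ ε) a * b * cfcₙ (cutoffFactor ‖a - b‖ ε) a := by
  set c := cfcₙ (cutoffFactor ‖a - b‖ ε) a
  have hc : IsSelfAdjoint c := cfcₙ_predicate _ _
  have hconj : c * (a - b) * c ≤ ‖a - b‖ • (c * c) := by
    simpa only [hc.star_eq] using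
      CStarAlgebra.star_left_conjugate_le_norm_smul (a := c) (ha.sub hb)
  rw [mul_sub, sub_mul] at hconj
  rw [cutoff_eq_conj_sub ha ((norm_nonneg _).trans hab.le) hab]
  exact sub_le_comm.mp hconj

end Cutoff

theorem cutoff_cuntzSubeq_of_norm_lt_general {A : Type*} [NonUnitalCStarAlgebra A] [PartialOrder A]
    [StarOrderedRing A] (ε : ℝ) (a b : A) (ha : 0 ≤ a) (hb : 0 ≤ b)
    (hab : ‖a - b‖ < ε) : CuntzSubeq (cutoff ε a) b := by
  set c := cfcₙ (cutoffFactor ‖a - b‖ ε) a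
  have hc : IsSelfAdjoint c := cfcₙ_predicate _ _
  refine CuntzSubeq.of_mul_mul_star (c := c) (CuntzSubeq.of_le ?_ ?_)
  · exact cfcₙ_nonneg fun t _ => le_max_right _ _
  · simpa only [hc.star_eq] using
      cutoff_le_conj_of_norm_sub_lt ha.isSelfAdjoint hb.isSelfAdjoint hab

/-- If `a, b ≥ 0` and `‖a - b‖ < ε`, then `(a - ε)₊ ≾ b`. -/
theorem cutoff_cuntzSubeq_of_norm_lt {A : Type*} [NonUnitalCStarAlgebra A] [PartialOrder A]
    [StarOrderedRing A] (ε : ℝ) (hε : 0 < ε) (a b : A) (ha : 0 ≤ a) (hb : 0 ≤ b)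
    (hab : ‖a - b‖ < ε) : CuntzSubeq (cutoff ε a) b :=
  cutoff_cuntzSubeq_of_norm_lt_general ε a b ha hb hab
end

section
/- Let A be a C*-algebra, let ε > 0, λ > 0, and let a, b be self-adjoint (or positive) elements of A with ‖a - b‖ < ε. Then (a - λ - ε)₊ is Cuntz subequivalent to (b - λ)₊. -/
open Filter Topology

/-!
Pass to the unitization. With `s = √((a - λ - ε)₊)` and `η = ε - ‖a - b‖ > 0`, functional
calculus in `a` and `a - b ≤ ‖a - b‖` give
`η (a - λ - ε)₊ ≤ s (a - λ - ‖a - b‖) s ≤ s (b - λ) s ≤ s (b - λ)₊ s`,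
so `(a - λ - ε)₊` is dominated by a conjugate of `(b - λ)₊`. Domination gives Cuntz
subequivalence: if `0 ≤ x ≤ y`, `u = (y + δ)^{-1/2}` and `v = √x u`, then `x - v y v* = δ v v*`,
whose norm is `δ ‖u x u‖ ≤ δ ‖u y u‖ ≤ δ`; and `v` lies in `A` because `√x` does and `A` is an
ideal of its unitization.
-/

theorem cuntzSubeq_iff_mem_closure {R : Type*} [Mul R] [Star R] [TopologicalSpace R]
    [FrechetUrysohnSpace R] {x y : R} :
    CuntzSubeq x y ↔ x ∈ closure (Set.range fun v : R => v * y * star v) := by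
  rw [mem_closure_iff_seq_limit]
  constructor
  · rintro ⟨v, hv⟩
    exact ⟨_, fun n => ⟨v n, rfl⟩, hv⟩
  · rintro ⟨u, hu, hlim⟩
    choose v hv using hu
    exact ⟨v, by simpa only [hv] using hlim⟩

section Unital

open CFC CStarAlgebra

variable {B : Type*} [CStarAlgebra B]

theorem sub_algebraMap_eq_cfc {a : B} (ha : IsSelfAdjoint a) (μ : ℝ) :
    a - algebraMap ℝ B μ = cfc (fun t : ℝ => t - μ) a := by
  rw [cfc_sub _ _ a, cfc_id' ℝ a, cfc_const μ a]

variable [PartialOrder B] [StarOrderedRing B]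

theorem norm_sub_sqrt_mul_conj_le {x y u : B} (hx : 0 ≤ x) (hxy : x ≤ y) (hu : IsSelfAdjoint u)
    {δ : ℝ} (hδ : 0 ≤ δ) (hinv : u * y * u + δ • (u * u) = 1) :
    ‖x - sqrt x * u * y * star (sqrt x * u)‖ ≤ δ := by
  have huyu : ‖u * y * u‖ ≤ 1 := by
    rw [norm_le_one_iff_of_nonneg _ (hu.conjugate_nonneg (hx.trans hxy)), ← hinv]
    exact le_add_of_nonneg_right (smul_nonneg hδ hu.mul_self_nonneg)
  set s := sqrt x
  have hs : star s = s := (sqrt_nonneg x).star_eq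
  have hss : s * s = x := sqrt_mul_sqrt_self x hx
  have hdiff : x - s * u * y * star (s * u) = δ • (s * u * star (s * u)) := by
    calc x - s * u * y * star (s * u) = s * s - s * (u * y * u) * s := by
          rw [star_mul, hu.star_eq, hs, hss]; noncomm_ring
      _ = δ • (s * u * star (s * u)) := by
          rw [eq_sub_of_add_eq hinv, star_mul, hu.star_eq, hs]
          simp only [mul_sub, sub_mul, mul_one, mul_smul_comm, smul_mul_assoc, mul_assoc]
          abel
  have hv : star (s * u) * (s * u) = u * x * u := by
    rw [star_mul, hu.star_eq, hs, ← hss]; noncomm_ring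
  have huxu : ‖u * x * u‖ ≤ 1 := (norm_le_norm_of_nonneg_of_le (hu.conjugate_nonneg hx)
    (hu.conjugate_le_conjugate hxy)).trans huyu
  rw [hdiff, norm_smul, Real.norm_of_nonneg hδ, CStarRing.norm_self_mul_star,
    ← CStarRing.norm_star_mul_self, hv]
  simpa using mul_le_mul_of_nonneg_left huxu hδ

theorem exists_norm_sub_sqrt_mul_conj_le {x y : B} (hx : 0 ≤ x) (hxy : x ≤ y) {δ : ℝ}
    (hδ : 0 < δ) : ∃ w, ‖x - sqrt x * w * y * star (sqrt x * w)‖ ≤ δ := by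
  have hy : 0 ≤ y := hx.trans hxy
  set g : ℝ → ℝ := fun t => (√(t + δ))⁻¹
  have hg : ContinuousOn g (spectrum ℝ y) := ContinuousOn.inv₀ (by fun_prop) fun t ht =>
    (Real.sqrt_pos.2 (by linarith [spectrum_nonneg_of_nonneg hy ht])).ne'
  refine ⟨cfc g y, norm_sub_sqrt_mul_conj_le hx hxy (cfc_predicate g y) hδ.le ?_⟩
  calc cfc g y * y * cfc g y + δ • (cfc g y * cfc g y)
      = cfc (fun t => g t * t * g t + δ * (g t * g t)) y := by
        rw [cfc_add y (fun t => g t * t * g t) (fun t => δ * (g t * g t))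
            ((hg.mul continuousOn_id).mul hg) (continuousOn_const.mul (hg.mul hg)),
          cfc_mul (fun t => g t * t) g y (hg.mul continuousOn_id) hg,
          cfc_mul g (fun t => t) y hg continuousOn_id,
          cfc_const_mul δ (fun t => g t * g t) y (hg.mul hg), cfc_mul g g y hg hg, cfc_id' ℝ y]
    _ = cfc (fun _ => 1) y := cfc_congr fun t ht => by
        have ht : 0 < t + δ := by linarith [spectrum_nonneg_of_nonneg hy ht]
        have := Real.sq_sqrt ht.le
        simp only [g]
        field_simp
        linarith
    _ = 1 := cfc_const_one ℝ y

theorem sub_smul_cfc_max_sub_le_conj {a : B} (ha : IsSelfAdjoint a) (μ ν : ℝ) :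
    (ν - μ) • cfc (fun t : ℝ => max (t - ν) 0) a ≤
      cfc (fun t : ℝ => √(max (t - ν) 0)) a * (a - algebraMap ℝ B μ) *
        cfc (fun t : ℝ => √(max (t - ν) 0)) a := by
  rw [sub_algebraMap_eq_cfc ha, ← cfc_mul .., ← cfc_mul .., ← cfc_const_mul ..]
  refine cfc_mono fun t _ => ?_
  rw [mul_right_comm, Real.mul_self_sqrt (le_max_right _ _)]
  rcases le_total t ν with h | h
  · simp [max_eq_right (sub_nonpos.2 h)]
  · rw [max_eq_left (sub_nonneg.2 h)]
    nlinarith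

theorem exists_cfc_max_sub_le_conj {a b : B} (ha : IsSelfAdjoint a) (hb : IsSelfAdjoint b)
    (lam : ℝ) {ε : ℝ} (hab : ‖a - b‖ < ε) :
    ∃ q : B, cfc (fun t : ℝ => max (t - (lam + ε)) 0) a ≤
      q * cfc (fun t : ℝ => max (t - lam) 0) b * star q := by
  set μ := lam + ‖a - b‖
  set s := cfc (fun t : ℝ => √(max (t - (lam + ε)) 0)) a
  have hs : IsSelfAdjoint s := cfc_predicate _ a
  have hη : 0 < lam + ε - μ := by simp only [μ]; linarith
  have hab' : a - algebraMap ℝ B μ ≤ b - algebraMap ℝ B lam := by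
    have := sub_nonneg.2 (ha.sub hb).le_algebraMap_norm_self
    rw [← sub_nonneg]
    convert this using 1
    simp only [μ, map_add]
    abel
  have hb' : b - algebraMap ℝ B lam ≤ cfc (fun t : ℝ => max (t - lam) 0) b := by
    rw [sub_algebraMap_eq_cfc hb]
    exact cfc_mono fun t _ => le_max_left _ _
  have key := (sub_smul_cfc_max_sub_le_conj ha μ (lam + ε)).trans
    (hs.conjugate_le_conjugate (hab'.trans hb'))
  refine ⟨(√(lam + ε - μ))⁻¹ • s, ?_⟩
  rw [star_smul, hs.star_eq, smul_mul_assoc, mul_smul_comm, smul_mul_assoc, smul_smul,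
    star_trivial, ← mul_inv, Real.mul_self_sqrt hη.le]
  exact (le_inv_smul_iff_of_pos hη).2 key

end Unital

theorem Unitization.inr_mul_eq_inr_s3 {R A : Type*} [CommSemiring R] [NonUnitalSemiring A]
    [Module R A] (z : A) (w : Unitization R A) :
    (z : Unitization R A) * w = ↑(w.fst • z + z * w.snd) :=
  Unitization.ext (by simp) (by simp)

section NonUnital

open CFC CStarAlgebra Unitization

variable {A : Type*} [NonUnitalCStarAlgebra A]

theorem Unitization.inr_cutoff (a : A) {ν : ℝ} (hν : 0 ≤ ν) :
    ((cutoff ν a : A) : A⁺¹) = cfc (fun t : ℝ => max (t - ν) 0) (a : A⁺¹) :=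
  real_cfcₙ_eq_cfc_inr a _ (by simpa using hν)

variable [PartialOrder A] [StarOrderedRing A]

theorem cuntzSubeq_of_inr_le_conj {x y : A} (hx : 0 ≤ x) (q : A⁺¹)
    (hxy : (x : A⁺¹) ≤ q * y * star q) : CuntzSubeq x y := by
  refine cuntzSubeq_iff_mem_closure.2 (Metric.mem_closure_iff.2 fun δ hδ => ?_)
  obtain ⟨w, hw⟩ := exists_norm_sub_sqrt_mul_conj_le (inr_nonneg_iff.2 hx) hxy (half_pos hδ)
  set v := (w * q).fst • sqrt x + sqrt x * (w * q).snd
  have hv : (v : A⁺¹) = sqrt (x : A⁺¹) * (w * q) := by rw [sqrt_inr, inr_mul_eq_inr_s3]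
  refine ⟨_, ⟨v, rfl⟩, ?_⟩
  rw [dist_eq_norm, ← norm_inr (𝕜 := ℂ)]
  push_cast [hv]
  simp only [star_mul, mul_assoc] at hw ⊢
  linarith

end NonUnital

theorem cutoff_cuntzSubeq_cutoff_of_norm_lt_general {A : Type*} [NonUnitalCStarAlgebra A]
    [PartialOrder A] [StarOrderedRing A] (ε lam : ℝ) (hlam : 0 < lam)
    (a b : A) (ha : IsSelfAdjoint a) (hb : IsSelfAdjoint b) (hab : ‖a - b‖ < ε) :
    CuntzSubeq (cutoff (lam + ε) a) (cutoff lam b) := by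
  have hε : 0 < ε := (norm_nonneg _).trans_lt hab
  have hab' : ‖(a : Unitization ℂ A) - b‖ < ε := by
    rwa [← Unitization.inr_sub, Unitization.norm_inr]
  obtain ⟨q, hq⟩ := exists_cfc_max_sub_le_conj (Unitization.isSelfAdjoint_inr.2 ha)
    (Unitization.isSelfAdjoint_inr.2 hb) lam hab'
  refine cuntzSubeq_of_inr_le_conj (cfcₙ_nonneg fun _ _ => le_max_right _ _) q ?_
  rwa [Unitization.inr_cutoff a (by linarith), Unitization.inr_cutoff b hlam.le]

/-- If `a, b` are self-adjoint with `‖a - b‖ < ε` then `(a - λ - ε)₊ ≾ (b - λ)₊`. -/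
theorem cutoff_cuntzSubeq_cutoff_of_norm_lt {A : Type*} [NonUnitalCStarAlgebra A]
    [PartialOrder A] [StarOrderedRing A] (ε lam : ℝ) (hε : 0 < ε) (hlam : 0 < lam)
    (a b : A) (ha : IsSelfAdjoint a) (hb : IsSelfAdjoint b) (hab : ‖a - b‖ < ε) :
    CuntzSubeq (cutoff (lam + ε) a) (cutoff lam b) :=
  cutoff_cuntzSubeq_cutoff_of_norm_lt_general ε lam hlam a b ha hb hab
end

section
/- Let A be a C*-algebra, let a, g be positive elements of A with 0 ≤ g ≤ 1, and let ε > 0. Then (a - ε)₊ is Cuntz subequivalent (in M₂(A)) to the direct sum [(1-g)a(1-g) - ε]₊ ⊕ g. -/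
/-!
Put `u = (1 - g) √a`, so that `u u* = (1 - g) a (1 - g)`, while `1 - (1 - g)² = g (2 - g)` gives
`a = u* u + v g v*` with `v = √a √(2 - g)`. For `r = (u u* + γ)^(-1/2)` one has
`r (u u* - ε) r = 1 - (ε + γ) r²` and `‖u* r² u‖ = ‖r u u* r‖ ≤ 1`, so `w = u* r` satisfies
`u* u - (ε + γ) ≤ w (u u* - ε)₊ w*`. Hence `a - (ε + γ) ≤ w [(1-g)a(1-g) - ε]₊ w* + v g v*`.
Compressing both sides by a function of `a` turns the left side into `(a - ε - 2γ)₊`, and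
`0 ≤ p ≤ q` makes `p` a norm limit of elements `x q x*` (take `x = √p (q + δ)^(-1/2)`).
So `(a - ε)₊` is a norm limit of `x B x* + y g y* = [x y; 0 0] (B ⊕ g) [x y; 0 0]*`.
-/

open Filter Topology

lemma Matrix.of_row_mul_diagonal_mul_star {R : Type*} [Semiring R] [StarRing R] (x y b c : R) :
    !![x, y; 0, 0] * diagonal ![b, c] * star !![x, y; 0, 0] =
      diagonal ![x * b * star x + y * c * star y, 0] := by
  ext i j
  fin_cases i <;> fin_cases j <;>
    simp [Matrix.star_eq_conjTranspose, Matrix.mul_apply, Matrix.vecMul, dotProduct,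
      Fin.sum_univ_two, mul_assoc]

lemma cuntzSubeq_diagonal_of_mem_closure {R : Type*} [Semiring R] [StarRing R]
    [TopologicalSpace R] [FrechetUrysohnSpace R] {a b c : R}
    (h : a ∈ closure {z | ∃ x y, x * b * star x + y * c * star y = z}) :
    CuntzSubeq (Matrix.diagonal ![a, 0]) (Matrix.diagonal ![b, c]) := by
  obtain ⟨z, hz, hlim⟩ := mem_closure_iff_seq_limit.1 h
  choose x y hxy using hz
  refine ⟨fun n => !![x n, y n; 0, 0], ?_⟩
  simp only [Matrix.of_row_mul_diagonal_mul_star, hxy]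
  exact ((by fun_prop : Continuous fun z : R => Matrix.diagonal ![z, 0]).tendsto a).comp hlim

section CStarAlgebra

variable {A : Type*} [CStarAlgebra A]

lemma cutoff_eq_cfc {s : ℝ} (hs : 0 ≤ s) (a : A) :
    cutoff s a = cfc (fun t => max (t - s) 0) a :=
  cfcₙ_eq_cfc (by fun_prop) (by simpa using hs)

lemma norm_cutoff_sub_cutoff_le (a : A) {s s' : ℝ} (hs : 0 ≤ s) (hs' : 0 ≤ s') :
    ‖cutoff s a - cutoff s' a‖ ≤ |s - s'| := by
  rw [cutoff_eq_cfc hs, cutoff_eq_cfc hs', ← cfc_sub ..]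
  refine norm_cfc_le (abs_nonneg _) fun t _ => ?_
  calc ‖max (t - s) 0 - max (t - s') 0‖ ≤ |(t - s) - (t - s')| := abs_max_sub_max_le_abs _ _ _
    _ = |s - s'| := by rw [abs_sub_comm]; ring_nf

lemma exists_isSelfAdjoint_conj_sub_algebraMap_eq_cutoff {a : A} (ha : IsSelfAdjoint a)
    {s γ : ℝ} (hs : 0 ≤ s) (hγ : 0 < γ) :
    ∃ e : A, IsSelfAdjoint e ∧ e * (a - algebraMap ℝ A s) * e = cutoff (s + γ) a := by
  -- `f² (t - s) = (t - s - γ)₊`; the denominator is `t - s` wherever the numerator is nonzero,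
  -- and is bounded below by `γ`, which keeps `f` continuous.
  set f : ℝ → ℝ := fun t => √(max (t - (s + γ)) 0 / max (t - s) γ)
  have hden : ∀ t, 0 < max (t - s) γ := fun t => hγ.trans_le (le_max_right _ _)
  have hf : Continuous f := Real.continuous_sqrt.comp
    ((by fun_prop : Continuous fun t => max (t - (s + γ)) 0).div (by fun_prop) fun t => (hden t).ne')
  refine ⟨cfc f a, cfc_predicate f a, ?_⟩
  rw [cutoff_eq_cfc (by positivity) a]
  calc cfc f a * (a - algebraMap ℝ A s) * cfc f a = cfc (fun t => f t * (t - s) * f t) a := by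
        rw [cfc_mul (fun t => f t * (t - s)) f a, cfc_mul f (fun t => t - s) a, cfc_sub ..,
          cfc_id' ℝ a, cfc_const s a]
    _ = cfc (fun t => max (t - (s + γ)) 0) a := cfc_congr fun t _ => by
        have hff : f t * f t = max (t - (s + γ)) 0 / max (t - s) γ :=
          Real.mul_self_sqrt (div_nonneg (le_max_right _ _) (hden t).le)
        rw [mul_right_comm, hff]
        rcases le_or_gt (s + γ) t with hle | hlt
        · rw [max_eq_left (by linarith), max_eq_left (by linarith)]
          field_simp [(by linarith : t - s ≠ 0)]
        · rw [max_eq_right (by linarith)]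
          simp

variable [PartialOrder A] [StarOrderedRing A]

lemma cutoff_nonneg (s : ℝ) (a : A) : 0 ≤ cutoff s a :=
  cfcₙ_nonneg fun _ _ => le_max_right _ _

lemma exists_isSelfAdjoint_mul_mul_eq_one_sub_smul {q : A} (hq : 0 ≤ q) {δ : ℝ} (hδ : 0 < δ) :
    ∃ r : A, IsSelfAdjoint r ∧ r * q * r = 1 - δ • (r * r) ∧ ‖r * q * r‖ ≤ 1 := by
  set f : ℝ → ℝ := fun t => (√(t + δ))⁻¹
  have hpos : ∀ t ∈ spectrum ℝ q, 0 < t + δ := fun t ht => by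
    have := spectrum_nonneg_of_nonneg hq ht
    positivity
  have hf : ContinuousOn f (spectrum ℝ q) :=
    (Real.continuous_sqrt.comp_continuousOn (by fun_prop)).inv₀ fun t ht =>
      (Real.sqrt_pos.2 (hpos t ht)).ne'
  have hr : IsSelfAdjoint (cfc f q) := cfc_predicate f q
  have hrqr : cfc f q * q * cfc f q = 1 - δ • (cfc f q * cfc f q) :=
    calc cfc f q * q * cfc f q = cfc (fun t => f t * t * f t) q := by
          rw [cfc_mul (fun t => f t * t) f q, cfc_mul f (fun t => t) q, cfc_id' ℝ q]
      _ = cfc (fun t => 1 - δ * (f t * f t)) q := cfc_congr fun t ht => by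
          have h := hpos t ht
          simp only [f]
          field_simp
          rw [Real.sq_sqrt h.le]
          ring
      _ = 1 - δ • (cfc f q * cfc f q) := by
          rw [cfc_sub .., cfc_const_mul .., cfc_mul f f q, cfc_const_one ℝ q]
  refine ⟨cfc f q, hr, hrqr, ?_⟩
  rw [CStarAlgebra.norm_le_one_iff_of_nonneg _ (hr.conjugate_nonneg hq), hrqr]
  exact sub_le_self _ (smul_nonneg hδ.le hr.mul_self_nonneg)

lemma exists_norm_conj_sub_le_of_le {p q : A} (hp : 0 ≤ p) (hpq : p ≤ q) {δ : ℝ} (hδ : 0 < δ) :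
    ∃ v : A, ‖v * q * star v - p‖ ≤ δ := by
  obtain ⟨r, hr, hrqr, hrqr_le⟩ :=
    exists_isSelfAdjoint_mul_mul_eq_one_sub_smul (hp.trans hpq) hδ
  set s := CFC.sqrt p
  have hs : IsSelfAdjoint s := .of_nonneg (CFC.sqrt_nonneg p)
  have hss : s * s = p := CFC.sqrt_mul_sqrt_self p hp
  have hstar : star (s * r) = r * s := by rw [star_mul, hr.star_eq, hs.star_eq]
  have hdefect : s * r * q * star (s * r) - p = -(δ • (s * r * star (s * r))) := by
    rw [hstar, ← hss]
    calc s * r * q * (r * s) - s * s = s * (r * q * r) * s - s * s := by noncomm_ring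
      _ = _ := by
          rw [hrqr]
          simp only [mul_sub, sub_mul, mul_one, mul_smul_comm, smul_mul_assoc, mul_assoc]
          abel
  have hnorm : ‖s * r * star (s * r)‖ ≤ 1 := by
    rw [CStarRing.norm_self_mul_star, ← CStarRing.norm_star_mul_self, hstar]
    calc ‖r * s * (s * r)‖ = ‖r * p * r‖ := by rw [← hss]; noncomm_ring
      _ ≤ ‖r * q * r‖ := CStarAlgebra.norm_le_norm_of_nonneg_of_le (hr.conjugate_nonneg hp)
          (hr.conjugate_le_conjugate hpq)
      _ ≤ 1 := hrqr_le
  refine ⟨s * r, ?_⟩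
  rw [hdefect, norm_neg, norm_smul, Real.norm_of_nonneg hδ.le]
  exact mul_le_of_le_one_right hδ.le hnorm

lemma exists_star_mul_self_sub_le_conj_cutoff (u : A) {ε γ : ℝ} (hε : 0 ≤ ε) (hγ : 0 < γ) :
    ∃ w : A, star u * u - algebraMap ℝ A (ε + γ) ≤ w * cutoff ε (u * star u) * star w := by
  obtain ⟨r, hr, hrbr, hrbr_le⟩ :=
    exists_isSelfAdjoint_mul_mul_eq_one_sub_smul (mul_star_self_nonneg u) hγ
  set b := u * star u
  have hstar : star (star u * r) = r * u := by rw [star_mul, hr.star_eq, star_star]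
  have hcut : b - algebraMap ℝ A ε ≤ cutoff ε b := by
    rw [cutoff_eq_cfc hε]
    calc b - algebraMap ℝ A ε = cfc (fun t => t - ε) b := by
          rw [cfc_sub .., cfc_id' .., cfc_const ..]
      _ ≤ cfc (fun t => max (t - ε) 0) b := cfc_mono fun t _ => le_max_left _ _
  have hww : star u * r * star (star u * r) ≤ 1 := by
    rw [← CStarAlgebra.norm_le_one_iff_of_nonneg _ (mul_star_self_nonneg _),
      CStarRing.norm_self_mul_star, ← CStarRing.norm_star_mul_self, hstar]
    calc ‖r * u * (star u * r)‖ = ‖r * b * r‖ := by simp only [b, mul_assoc]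
      _ ≤ 1 := hrbr_le
  refine ⟨star u * r, ?_⟩
  calc star u * u - algebraMap ℝ A (ε + γ)
      ≤ star u * u - (ε + γ) • (star u * r * star (star u * r)) := by
        rw [Algebra.algebraMap_eq_smul_one]
        exact sub_le_sub_left (smul_le_smul_of_nonneg_left hww (by positivity)) _
    _ = star u * (r * b * r) * u - ε • (star u * r * (r * u)) := by
        rw [hrbr, hstar]
        simp only [mul_sub, sub_mul, mul_one, mul_smul_comm, smul_mul_assoc, mul_assoc, add_smul]
        abel
    _ = star u * r * (b - algebraMap ℝ A ε) * star (star u * r) := by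
        rw [hstar, Algebra.algebraMap_eq_smul_one]
        simp only [b, mul_sub, sub_mul, mul_one, mul_smul_comm, smul_mul_assoc, mul_assoc]
    _ ≤ star u * r * cutoff ε b * star (star u * r) := star_right_conjugate_le_conjugate hcut _

lemma exists_norm_conj_sub_cutoff_le_of_sub_le {a q : A} (ha : IsSelfAdjoint a) {s γ δ : ℝ}
    (hs : 0 ≤ s) (hγ : 0 < γ) (hδ : 0 < δ) (haq : a - algebraMap ℝ A s ≤ q) :
    ∃ v : A, ‖v * q * star v - cutoff (s + γ) a‖ ≤ δ := by
  obtain ⟨e, he, hcut⟩ := exists_isSelfAdjoint_conj_sub_algebraMap_eq_cutoff ha hs hγ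
  have hle : cutoff (s + γ) a ≤ e * q * e := hcut ▸ he.conjugate_le_conjugate haq
  obtain ⟨v, hv⟩ := exists_norm_conj_sub_le_of_le (cutoff_nonneg _ _) hle hδ
  refine ⟨v * e, ?_⟩
  simpa only [star_mul, he.star_eq, mul_assoc] using hv

lemma exists_eq_star_mul_self_add_conj {a g : A} (ha : 0 ≤ a) (hg₀ : 0 ≤ g) (hg₁ : g ≤ 1) :
    ∃ u v : A, u * star u = (1 - g) * a * (1 - g) ∧ a = star u * u + v * g * star v := by
  set s := CFC.sqrt a
  have hs : IsSelfAdjoint s := .of_nonneg (CFC.sqrt_nonneg a)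
  have hss : s * s = a := CFC.sqrt_mul_sqrt_self a ha
  have hg : IsSelfAdjoint g := .of_nonneg hg₀
  have hspec : ∀ t ∈ spectrum ℝ g, t ≤ 1 := (CFC.le_one_iff g).1 hg₁
  set k := cfc (fun t : ℝ => √(2 - t)) g
  have hk : IsSelfAdjoint k := cfc_predicate _ g
  have hkgk : k * g * k = 1 - (1 - g) * (1 - g) :=
    calc k * g * k = cfc (fun t => √(2 - t) * t * √(2 - t)) g := by
          rw [cfc_mul (fun t => √(2 - t) * t) _ g, cfc_mul _ (fun t => t) g, cfc_id' ℝ g]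
      _ = cfc (fun t => 1 - (1 - t) * (1 - t)) g := cfc_congr fun t ht => by
          rw [mul_right_comm, Real.mul_self_sqrt (by linarith [hspec t ht])]
          ring
      _ = 1 - (1 - g) * (1 - g) := by
          rw [cfc_sub (fun _ => 1) (fun t => (1 - t) * (1 - t)) g,
            cfc_mul (fun t => 1 - t) (fun t => 1 - t) g, cfc_sub (fun _ => 1) (fun t => t) g,
            cfc_const_one ℝ g, cfc_id' ℝ g]
  refine ⟨(1 - g) * s, s * k, ?_, ?_⟩
  · rw [star_mul, hs.star_eq, star_sub, star_one, hg.star_eq, ← hss]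
    noncomm_ring
  · rw [star_mul, star_mul, hs.star_eq, hk.star_eq, star_sub, star_one, hg.star_eq]
    calc a = s * ((1 - g) * (1 - g) + k * g * k) * s := by
          rw [hkgk, add_sub_cancel, mul_one, hss]
      _ = _ := by noncomm_ring

lemma exists_norm_conj_add_conj_sub_cutoff_le {a g : A} (ha : 0 ≤ a) (hg₀ : 0 ≤ g) (hg₁ : g ≤ 1)
    {ε γ δ : ℝ} (hε : 0 ≤ ε) (hγ : 0 < γ) (hδ : 0 < δ) :
    ∃ x y : A, ‖x * cutoff ε ((1 - g) * a * (1 - g)) * star x + y * g * star y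
      - cutoff (ε + γ + γ) a‖ ≤ δ := by
  obtain ⟨u, v, hb, ha_eq⟩ := exists_eq_star_mul_self_add_conj ha hg₀ hg₁
  obtain ⟨w, hw⟩ := exists_star_mul_self_sub_le_conj_cutoff u hε hγ
  rw [hb] at hw
  have hsub : a - algebraMap ℝ A (ε + γ)
      ≤ w * cutoff ε ((1 - g) * a * (1 - g)) * star w + v * g * star v := by
    calc a - algebraMap ℝ A (ε + γ) = star u * u - algebraMap ℝ A (ε + γ) + v * g * star v := by
          conv_lhs => rw [ha_eq]
          abel
      _ ≤ _ := add_le_add_left hw _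
  obtain ⟨x, hx⟩ :=
    exists_norm_conj_sub_cutoff_le_of_sub_le (IsSelfAdjoint.of_nonneg ha) (by positivity) hγ hδ hsub
  refine ⟨x * w, x * v, ?_⟩
  convert hx using 2
  simp only [star_mul, mul_add, add_mul, mul_assoc]

end CStarAlgebra

/-- `(a - ε)₊ ⊕ 0 ≾ [(1-g)a(1-g) - ε]₊ ⊕ g` in `M₂(A)`, for `a ≥ 0`, `0 ≤ g ≤ 1`. -/
theorem cutoff_cuntzSubeq_corner_oplus {A : Type*} [CStarAlgebra A] [PartialOrder A]
    [StarOrderedRing A] (a g : A) (ha : 0 ≤ a) (hg₀ : 0 ≤ g) (hg₁ : g ≤ 1)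
    (ε : ℝ) (hε : 0 < ε) :
    CuntzSubeq (Matrix.diagonal ![cutoff ε a, 0])
      (Matrix.diagonal ![cutoff ε ((1 - g) * a * (1 - g)), g]) := by
  refine cuntzSubeq_diagonal_of_mem_closure (Metric.mem_closure_iff.2 fun δ hδ => ?_)
  obtain ⟨x, y, hxy⟩ := exists_norm_conj_add_conj_sub_cutoff_le ha hg₀ hg₁ hε.le
    (γ := δ / 4) (δ := δ / 4) (by positivity) (by positivity)
  refine ⟨_, ⟨x, y, rfl⟩, ?_⟩
  rw [dist_comm, dist_eq_norm]
  calc _ ≤ ‖x * cutoff ε ((1 - g) * a * (1 - g)) * star x + y * g * star y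
          - cutoff (ε + δ / 4 + δ / 4) a‖ + ‖cutoff (ε + δ / 4 + δ / 4) a - cutoff ε a‖ :=
        norm_sub_le_norm_sub_add_norm_sub _ _ _
    _ ≤ δ / 4 + |(ε + δ / 4 + δ / 4) - ε| :=
        add_le_add hxy (norm_cutoff_sub_cutoff_le a (by positivity) hε.le)
    _ < δ := by rw [abs_of_pos (by linarith)]; linarith
end

section
/- Let f : [0,1] → ℂ be continuous. Then for every ε > 0 there exists δ > 0 such that for every C*-algebra A and all x, y ∈ A with 0 ≤ x ≤ 1, ‖y‖ ≤ 1, and ‖xy - yx‖ < δ, one has ‖f(x)y - y f(x)‖ < ε. -/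
/-!
Approximate `f` uniformly on `[0,1]` by a complex polynomial `q` (Weierstrass, applied to the
real and imaginary parts). Since `σ(x) ⊆ [0,1]`, the isometric functional calculus gives
`‖f(x) - q(x)‖ ≤ sup_{[0,1]} |f - q|`, and `‖[q(x), y]‖ ≤ C_q ‖[x, y]‖` because `[xⁿ, y]`
telescopes into `n` terms of the form `xⁱ [x, y] xⁿ⁻¹⁻ⁱ`. The constant `C_q` depends only on
`q`, hence only on `f` and `ε`.
-/

open Polynomial

theorem norm_pow_mul_sub_mul_pow_le {A : Type*} [SeminormedRing A] {x : A} (y : A)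
    (hx : ‖x‖ ≤ 1) (h1 : ‖(1 : A)‖ ≤ 1) (n : ℕ) :
    ‖x ^ n * y - y * x ^ n‖ ≤ n * ‖x * y - y * x‖ := by
  induction n with
  | zero => simp
  | succ n ih =>
    have hxn : ‖x ^ n‖ ≤ 1 := by
      rcases n with _ | n
      · simpa using h1
      · exact (norm_pow_le' x n.succ_pos).trans (pow_le_one₀ (norm_nonneg x) hx)
    calc ‖x ^ (n + 1) * y - y * x ^ (n + 1)‖
        = ‖x ^ n * (x * y - y * x) + (x ^ n * y - y * x ^ n) * x‖ := by
          congr 1; noncomm_ring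
      _ ≤ ‖x ^ n‖ * ‖x * y - y * x‖ + ‖x ^ n * y - y * x ^ n‖ * ‖x‖ :=
          (norm_add_le _ _).trans (add_le_add (norm_mul_le _ _) (norm_mul_le _ _))
      _ ≤ 1 * ‖x * y - y * x‖ + (n * ‖x * y - y * x‖) * 1 := by gcongr
      _ = (n + 1 : ℕ) * ‖x * y - y * x‖ := by push_cast; ring

theorem norm_aeval_mul_sub_mul_aeval_le {𝕜 A : Type*} [NormedField 𝕜] [SeminormedRing A]
    [NormedAlgebra 𝕜 A] (q : 𝕜[X]) {x : A} (y : A) (hx : ‖x‖ ≤ 1) (h1 : ‖(1 : A)‖ ≤ 1) :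
    ‖aeval x q * y - y * aeval x q‖
      ≤ (∑ i ∈ Finset.range (q.natDegree + 1), ‖q.coeff i‖ * i) * ‖x * y - y * x‖ := by
  simp only [aeval_eq_sum_range, Finset.sum_mul, Finset.mul_sum, ← Finset.sum_sub_distrib,
    smul_mul_assoc, mul_smul_comm, ← smul_sub]
  refine (norm_sum_le _ _).trans (Finset.sum_le_sum fun i _ => ?_)
  rw [norm_smul, mul_assoc]
  gcongr
  exact norm_pow_mul_sub_mul_pow_le y hx h1 i

theorem norm_mul_sub_mul_le_norm_sub_add {A : Type*} [SeminormedRing A] (a b y : A) :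
    ‖a * y - y * a‖ ≤ 2 * ‖a - b‖ * ‖y‖ + ‖b * y - y * b‖ :=
  calc ‖a * y - y * a‖ = ‖(a - b) * y - y * (a - b) + (b * y - y * b)‖ := by
        congr 1; noncomm_ring
    _ ≤ ‖a - b‖ * ‖y‖ + ‖y‖ * ‖a - b‖ + ‖b * y - y * b‖ :=
        (norm_add_le _ _).trans (add_le_add ((norm_sub_le _ _).trans
          (add_le_add (norm_mul_le _ _) (norm_mul_le _ _))) le_rfl)
    _ = 2 * ‖a - b‖ * ‖y‖ + ‖b * y - y * b‖ := by ring

theorem exists_complex_polynomial_near_of_continuousOn (a b : ℝ) (g : ℝ → ℂ)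
    (hg : ContinuousOn g (Set.Icc a b)) (ε : ℝ) (hε : 0 < ε) :
    ∃ q : ℂ[X], ∀ r ∈ Set.Icc a b, ‖q.eval (r : ℂ) - g r‖ < ε := by
  obtain ⟨p₁, hp₁⟩ := exists_polynomial_near_of_continuousOn a b (fun r => (g r).re)
    (Complex.continuous_re.comp_continuousOn hg) (ε / 2) (half_pos hε)
  obtain ⟨p₂, hp₂⟩ := exists_polynomial_near_of_continuousOn a b (fun r => (g r).im)
    (Complex.continuous_im.comp_continuousOn hg) (ε / 2) (half_pos hε)
  refine ⟨p₁.map Complex.ofRealHom + C Complex.I * p₂.map Complex.ofRealHom, fun r hr => ?_⟩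
  calc _ ≤ |p₁.eval r - (g r).re| + |p₂.eval r - (g r).im| := by
        refine (Complex.norm_le_abs_re_add_abs_im _).trans_eq ?_
        have hmap (p : ℝ[X]) : (p.map Complex.ofRealHom).eval (r : ℂ) = p.eval r :=
          eval_map_apply (f := Complex.ofRealHom) r
        simp [hmap]
    _ < ε / 2 + ε / 2 := add_lt_add (hp₁ r hr) (hp₂ r hr)
    _ = ε := add_halves ε

theorem CStarRing.norm_one_le_one {E : Type*} [NormedRing E] [StarRing E] [CStarRing E] :
    ‖(1 : E)‖ ≤ 1 := by
  rcases subsingleton_or_nontrivial E with hE | hE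
  · simp [Subsingleton.elim (1 : E) 0]
  · exact CStarRing.norm_one.le

section CStarAlgebra

variable {A : Type*} [CStarAlgebra A] [PartialOrder A] [StarOrderedRing A]

theorem spectrum_subset_ofReal_Icc {x : A} (hx₀ : 0 ≤ x) (hx₁ : x ≤ 1) :
    spectrum ℂ x ⊆ Complex.ofReal '' Set.Icc 0 1 := by
  rw [← hx₀.isSelfAdjoint.spectrumRestricts.algebraMap_image]
  exact Set.image_mono fun r hr =>
    ⟨spectrum_nonneg_of_nonneg hx₀ hr, (CFC.le_one_iff x).mp hx₁ r hr⟩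

theorem norm_cfc_mul_sub_mul_cfc_le {f : ℂ → ℂ}
    (hf : ContinuousOn f (Complex.ofReal '' Set.Icc 0 1)) {q : ℂ[X]} {η : ℝ}
    (hq : ∀ r ∈ Set.Icc (0 : ℝ) 1, ‖q.eval (r : ℂ) - f r‖ ≤ η)
    {x y : A} (hx₀ : 0 ≤ x) (hx₁ : x ≤ 1) (hy : ‖y‖ ≤ 1) :
    ‖cfc f x * y - y * cfc f x‖
      ≤ 2 * η + (∑ i ∈ Finset.range (q.natDegree + 1), ‖q.coeff i‖ * i) * ‖x * y - y * x‖ := by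
  have hspec := spectrum_subset_ofReal_Icc hx₀ hx₁
  have hη : 0 ≤ η := (norm_nonneg _).trans (hq 0 ⟨le_rfl, zero_le_one⟩)
  have happrox : ‖cfc f x - aeval x q‖ ≤ η := by
    rw [← cfc_polynomial q x, ← cfc_sub f q.eval x (hf.mono hspec) q.continuous.continuousOn]
    refine norm_cfc_le hη fun z hz => ?_
    obtain ⟨r, hr, rfl⟩ := hspec hz
    rw [norm_sub_rev]
    exact hq r hr
  have hx : ‖x‖ ≤ 1 := (CStarAlgebra.norm_le_one_iff_of_nonneg x hx₀).mpr hx₁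
  calc _ ≤ 2 * ‖cfc f x - aeval x q‖ * ‖y‖ + ‖aeval x q * y - y * aeval x q‖ :=
        norm_mul_sub_mul_le_norm_sub_add _ _ _
    _ ≤ 2 * η * 1
          + (∑ i ∈ Finset.range (q.natDegree + 1), ‖q.coeff i‖ * i) * ‖x * y - y * x‖ := by
        gcongr
        exact norm_aeval_mul_sub_mul_aeval_le q y hx CStarRing.norm_one_le_one
    _ = _ := by rw [mul_one]

end CStarAlgebra

/-- For every continuous `f : [0,1] → ℂ` and every `ε > 0` there is `δ > 0`, depending
only on `f` and `ε`, such that in any (unital) C*-algebra `A`, whenever `0 ≤ x ≤ 1`,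
`‖y‖ ≤ 1` and `‖xy - yx‖ < δ`, one has `‖f(x) y - y f(x)‖ < ε`.  Here `f(x)` is the
continuous functional calculus of the normal element `x`. -/
theorem exists_delta_commutator_cfc (f : ℂ → ℂ)
    (hf : ContinuousOn f (Complex.ofReal '' Set.Icc (0 : ℝ) 1)) :
    ∀ ε : ℝ, 0 < ε → ∃ δ : ℝ, 0 < δ ∧
      ∀ (A : Type) [CStarAlgebra A] [PartialOrder A] [StarOrderedRing A],
        ∀ x y : A, 0 ≤ x → x ≤ 1 → ‖y‖ ≤ 1 → ‖x * y - y * x‖ < δ →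
          ‖cfc f x * y - y * cfc f x‖ < ε := by
  intro ε hε
  obtain ⟨q, hq⟩ := exists_complex_polynomial_near_of_continuousOn 0 1 (fun r => f r)
    (hf.comp Complex.continuous_ofReal.continuousOn (Set.mapsTo_image _ _)) (ε / 4) (by positivity)
  set C := ∑ i ∈ Finset.range (q.natDegree + 1), ‖q.coeff i‖ * i
  have hC : 0 ≤ C := Finset.sum_nonneg fun i _ => by positivity
  refine ⟨ε / (2 * (C + 1)), by positivity, fun A _ _ _ x y hx₀ hx₁ hy hxy => ?_⟩
  calc _ ≤ 2 * (ε / 4) + C * ‖x * y - y * x‖ :=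
        norm_cfc_mul_sub_mul_cfc_le hf (fun r hr => (hq r hr).le) hx₀ hx₁ hy
    _ < 2 * (ε / 4) + (C + 1) * (ε / (2 * (C + 1))) := by gcongr; linarith
    _ = ε := by field_simp; ring
end

section
/- Let f : [0,1] → [0,1] be continuous with f(0) = 0. Then for every ε > 0 there exists δ > 0 with the following property: whenever A is a C*-algebra, B ⊆ A is a C*-subalgebra, x ∈ A is positive with ‖x‖ ≤ 1, a ∈ B satisfies 0 ≤ a ≤ 1, and there exists b ∈ B positive with ‖a x a - b‖ < δ, then there exists c ∈ B positive with ‖f(a) x f(a) - c‖ < ε. -/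
open Polynomial in
private lemma norm_mul3_le' {A : Type*} [NonUnitalSeminormedRing A] (u v w : A) :
    ‖u * v * w‖ ≤ ‖u‖ * ‖v‖ * ‖w‖ :=
  (norm_mul_le _ _).trans (mul_le_mul_of_nonneg_right (norm_mul_le u v) (norm_nonneg w))

/-- Lemma 2.6-type statement: for continuous `f : [0,1] → [0,1]` with `f 0 = 0` and every
`ε > 0` there is `δ > 0` (depending only on `f, ε`) such that: whenever `A` is a
C*-algebra, `B ⊆ A` is a closed `*`-subalgebra, `x ∈ A₊` with `‖x‖ ≤ 1`, `a ∈ B` with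
`0 ≤ a ≤ 1`, and some positive `b ∈ B` satisfies `‖a x a - b‖ < δ`, then some positive
`c ∈ B` satisfies `‖f(a) x f(a) - c‖ < ε`. -/
theorem exists_delta_cfc_conj_approx (f : ℝ → ℝ)
    (hf : ContinuousOn f (Set.Icc (0 : ℝ) 1))
    (hf01 : Set.MapsTo f (Set.Icc (0 : ℝ) 1) (Set.Icc (0 : ℝ) 1))
    (hf0 : f 0 = 0) :
    ∀ ε : ℝ, 0 < ε → ∃ δ : ℝ, 0 < δ ∧
      ∀ (A : Type) [CStarAlgebra A] [PartialOrder A] [StarOrderedRing A]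
        (B : StarSubalgebra ℂ A), IsClosed (B : Set A) →
        ∀ x a : A, 0 ≤ x → ‖x‖ ≤ 1 → a ∈ B → 0 ≤ a → a ≤ 1 →
          (∃ b ∈ B, 0 ≤ b ∧ ‖a * x * a - b‖ < δ) →
          ∃ c ∈ B, 0 ≤ c ∧ ‖cfcₙ f a * x * cfcₙ f a - c‖ < ε := by
  intro ε hε
  set η : ℝ := min (ε / 16) (1 / 2) with hηdef
  have hη : (0 : ℝ) < η := lt_min (by positivity) one_half_pos
  have hη16 : η ≤ ε / 16 := min_le_left _ _
  have hη2 : η ≤ 1 / 2 := min_le_right _ _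
  obtain ⟨p₀, hp₀⟩ := exists_polynomial_near_of_continuousOn 0 1 f hf η hη
  set p : Polynomial ℝ := p₀ - Polynomial.C (p₀.eval 0) with hpdef
  have hp0 : p.eval 0 = 0 := by simp [hpdef]
  have hp : ∀ t ∈ Set.Icc (0 : ℝ) 1, |f t - p.eval t| ≤ 2 * η := by
    intro t ht
    have h1 := hp₀ t ht
    have h2 := hp₀ 0 (Set.mem_Icc.mpr ⟨le_refl _, zero_le_one⟩)
    rw [hf0] at h2
    have he : f t - p.eval t = -(p₀.eval t - f t) + (p₀.eval 0 - 0) := by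
      simp [hpdef]; ring
    rw [he]
    calc |(-(p₀.eval t - f t)) + (p₀.eval 0 - 0)| ≤ |(-(p₀.eval t - f t))| + |p₀.eval 0 - 0| :=
          abs_add_le _ _
      _ ≤ η + η := by rw [abs_neg]; exact add_le_add h1.le h2.le
      _ = 2 * η := by ring
  set q : Polynomial ℝ := p.divX with hqdef
  have hpq : ∀ t : ℝ, p.eval t = q.eval t * t := by
    intro t
    conv_lhs => rw [← p.divX_mul_X_add]
    rw [Polynomial.coeff_zero_eq_eval_zero, hp0]
    simp [hqdef]
  set M : ℝ := ‖q.toContinuousMapOn (Set.Icc (0 : ℝ) 1)‖ with hMdef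
  have hM0 : 0 ≤ M := norm_nonneg _
  have hMq : ∀ t ∈ Set.Icc (0 : ℝ) 1, |q.eval t| ≤ M := by
    intro t ht
    simpa [Real.norm_eq_abs] using
      (q.toContinuousMapOn (Set.Icc (0 : ℝ) 1)).norm_coe_le_norm ⟨t, ht⟩
  refine ⟨ε / (2 * (M + 1) ^ 2), by positivity, ?_⟩
  intro A _ _ _ B _hB x a hx hx1 haB ha0 ha1 hex
  obtain ⟨b, hbB, hb0, hab⟩ := hex
  have haSA : IsSelfAdjoint a := IsSelfAdjoint.of_nonneg ha0
  have hspec : spectrum ℝ a ⊆ Set.Icc (0 : ℝ) 1 := by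
    intro t ht
    refine ⟨spectrum_nonneg_of_nonneg ha0 ht, ?_⟩
    have h1' : a ≤ algebraMap ℝ A 1 := by simpa using ha1
    exact (le_algebraMap_iff_spectrum_le haSA).mp h1' t ht
  have hqspec : quasispectrum ℝ a ⊆ Set.Icc (0 : ℝ) 1 := by
    rw [quasispectrum_eq_spectrum_union_zero]
    rintro t (ht | ht)
    · exact hspec ht
    · simp only [Set.mem_singleton_iff] at ht
      subst ht
      exact Set.left_mem_Icc.mpr zero_le_one
  have hfc : ContinuousOn f (spectrum ℝ a) := hf.mono hspec
  set e : A := cfc (fun t : ℝ => q.eval t) a with hedef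
  have heB : e ∈ B := by
    rw [hedef, show (fun t : ℝ => q.eval t) = q.eval from rfl, cfc_polynomial q a,
      Polynomial.aeval_eq_sum_range]
    refine sum_mem fun i _ => ?_
    rw [← algebraMap_smul ℂ (q.coeff i) (a ^ i)]
    exact SMulMemClass.smul_mem _ (pow_mem haB i)
  have heSA : IsSelfAdjoint e := cfc_predicate _ a
  have heM : ‖e‖ ≤ M := norm_cfc_le hM0 fun t ht => by
    simpa [Real.norm_eq_abs] using hMq t (hspec ht)
  set y : A := cfc f a with hydef
  have hcfcn : cfcₙ f a = y := cfcₙ_eq_cfc (hf.mono hqspec) hf0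
  set P : A := cfc (fun t : ℝ => p.eval t) a with hPdef
  have hyP : ‖y - P‖ ≤ 2 * η := by
    rw [hydef, hPdef, ← cfc_sub f (fun t : ℝ => p.eval t) a hfc (by fun_prop)]
    exact norm_cfc_le (by positivity) fun t ht => by
      simpa [Real.norm_eq_abs] using hp t (hspec ht)
  have hynorm : ‖y‖ ≤ 1 := norm_cfc_le zero_le_one fun t ht => by
    have h := hf01 (hspec ht)
    rw [Real.norm_eq_abs, abs_le]
    exact ⟨by linarith [h.1], h.2⟩
  have hPnorm : ‖P‖ ≤ 2 := by
    calc ‖P‖ = ‖y - (y - P)‖ := by rw [sub_sub_cancel]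
      _ ≤ ‖y‖ + ‖y - P‖ := norm_sub_le _ _
      _ ≤ 1 + 2 * η := add_le_add hynorm hyP
      _ ≤ 2 := by linarith
  have hPea : P = e * a := by
    rw [hPdef, hedef]
    calc cfc (fun t : ℝ => p.eval t) a = cfc (fun t : ℝ => q.eval t * t) a :=
          cfc_congr fun t _ => hpq t
      _ = cfc (fun t : ℝ => q.eval t) a * cfc (fun t : ℝ => t) a :=
          cfc_mul _ _ a (by fun_prop) (by fun_prop)
      _ = cfc (fun t : ℝ => q.eval t) a * a := by rw [cfc_id' ℝ a]
  have hPae : P = a * e := by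
    rw [hPdef, hedef]
    calc cfc (fun t : ℝ => p.eval t) a = cfc (fun t : ℝ => t * q.eval t) a :=
          cfc_congr fun t _ => by rw [hpq t]; ring
      _ = cfc (fun t : ℝ => t) a * cfc (fun t : ℝ => q.eval t) a :=
          cfc_mul _ _ a (by fun_prop) (by fun_prop)
      _ = a * cfc (fun t : ℝ => q.eval t) a := by rw [cfc_id' ℝ a]
  refine ⟨e * b * e, mul_mem (mul_mem heB hbB) heB, heSA.conjugate_nonneg hb0, ?_⟩
  rw [hcfcn]
  have h1 : e * (a * x * a) * e = P * x * P := by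
    calc e * (a * x * a) * e = (e * a) * x * (a * e) := by noncomm_ring
      _ = P * x * P := by rw [← hPea, ← hPae]
  have key : y * x * y - e * b * e =
      (y - P) * x * y + P * x * (y - P) + e * (a * x * a - b) * e := by
    have h2 : e * (a * x * a - b) * e = P * x * P - e * b * e := by
      rw [mul_sub, sub_mul, h1]
    rw [h2]; noncomm_ring
  have hxnn : (0 : ℝ) ≤ ‖x‖ := norm_nonneg x
  have t1 : ‖(y - P) * x * y‖ ≤ 2 * η := by
    calc ‖(y - P) * x * y‖ ≤ ‖y - P‖ * ‖x‖ * ‖y‖ := norm_mul3_le' _ _ _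
      _ ≤ (2 * η) * 1 * 1 := by gcongr
      _ = 2 * η := by ring
  have t2 : ‖P * x * (y - P)‖ ≤ 4 * η := by
    calc ‖P * x * (y - P)‖ ≤ ‖P‖ * ‖x‖ * ‖y - P‖ := norm_mul3_le' _ _ _
      _ ≤ 2 * 1 * (2 * η) := by gcongr
      _ = 4 * η := by ring
  have t3 : ‖e * (a * x * a - b) * e‖ ≤ ε / 2 := by
    have habδ : ‖a * x * a - b‖ ≤ ε / (2 * (M + 1) ^ 2) := hab.le
    calc ‖e * (a * x * a - b) * e‖ ≤ ‖e‖ * ‖a * x * a - b‖ * ‖e‖ := norm_mul3_le' _ _ _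
      _ ≤ (M + 1) * (ε / (2 * (M + 1) ^ 2)) * (M + 1) := by
          gcongr <;> first | positivity | linarith
      _ = ε / 2 := by field_simp
  calc ‖y * x * y - e * b * e‖
      ≤ ‖(y - P) * x * y‖ + ‖P * x * (y - P)‖ + ‖e * (a * x * a - b) * e‖ := by
        rw [key]; exact norm_add₃_le
    _ ≤ 2 * η + 4 * η + ε / 2 := by linarith
    _ < ε := by linarith
end

section
/- Let A be a C*-algebra and let r₀, r₁, a ∈ A with 0 ≤ r₀ ≤ 1, 0 ≤ r₁ ≤ 1, r₀ r₁ = r₁, a positive, and let x ∈ A be self-adjoint with ‖x‖ ≤ 1. Suppose ‖a r₀ - r₀‖ < ε/2 and xa = ax = 0. Then y := (1 - r₀) x (1 - r₀) is self-adjoint with ‖y‖ ≤ 1, satisfies r₁ y = y r₁ = 0, and ‖x - y‖ < ε. -/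
/-- Given `0 ≤ r₀, r₁ ≤ 1` with `r₀ r₁ = r₁`, a self-adjoint contraction `x`, and a
positive `a` orthogonal to `x` (`x a = a x = 0`) with `‖a r₀ - r₀‖ < ε / 2`, the element
`y = (1 - r₀) x (1 - r₀)` is a self-adjoint contraction with `r₁ y = y r₁ = 0` and
`‖x - y‖ < ε`. -/
theorem corner_cutdown_orthogonal {A : Type*} [CStarAlgebra A] [PartialOrder A]
    [StarOrderedRing A] (ε : ℝ) (hε : 0 < ε) (r₀ r₁ a x : A)
    (hr₀ : 0 ≤ r₀) (hr₀1 : r₀ ≤ 1) (hr₁ : 0 ≤ r₁) (hr₁1 : r₁ ≤ 1)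
    (hmul : r₀ * r₁ = r₁) (hx : IsSelfAdjoint x) (hxnorm : ‖x‖ ≤ 1)
    (ha : 0 ≤ a) (hxa : x * a = 0) (hax : a * x = 0)
    (har : ‖a * r₀ - r₀‖ < ε / 2) :
    IsSelfAdjoint ((1 - r₀) * x * (1 - r₀)) ∧ ‖(1 - r₀) * x * (1 - r₀)‖ ≤ 1 ∧
      r₁ * ((1 - r₀) * x * (1 - r₀)) = 0 ∧ ((1 - r₀) * x * (1 - r₀)) * r₁ = 0 ∧
      ‖x - (1 - r₀) * x * (1 - r₀)‖ < ε := by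
  have hr₀sa : IsSelfAdjoint r₀ := IsSelfAdjoint.of_nonneg hr₀
  have hr₁sa : IsSelfAdjoint r₁ := IsSelfAdjoint.of_nonneg hr₁
  have hasa : IsSelfAdjoint a := IsSelfAdjoint.of_nonneg ha
  have hmul' : r₁ * r₀ = r₁ := by
    have := congrArg star hmul
    simpa [star_mul, hr₀sa.star_eq, hr₁sa.star_eq] using this
  have hsa1 : IsSelfAdjoint (1 - r₀) := (IsSelfAdjoint.one A).sub hr₀sa
  have hysa : IsSelfAdjoint ((1 - r₀) * x * (1 - r₀)) := by
    rw [IsSelfAdjoint, star_mul, star_mul, hsa1.star_eq, hx.star_eq]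
    noncomm_ring
  refine ⟨hysa, ?_, ?_, ?_, ?_⟩
  · have h1 : ‖(1 : A) - r₀‖ ≤ 1 := by
      rw [CStarAlgebra.norm_le_one_iff_of_nonneg _ (by simpa using hr₀1)]
      simpa using hr₀
    calc ‖(1 - r₀) * x * (1 - r₀)‖ ≤ ‖(1 - r₀) * x‖ * ‖1 - r₀‖ := norm_mul_le _ _
      _ ≤ ‖(1 : A) - r₀‖ * ‖x‖ * ‖(1 : A) - r₀‖ :=
        mul_le_mul_of_nonneg_right (norm_mul_le _ _) (norm_nonneg _)
      _ ≤ 1 * 1 * 1 := by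
        have := norm_nonneg ((1:A) - r₀); have := norm_nonneg x
        apply mul_le_mul (mul_le_mul h1 hxnorm (by positivity) (by norm_num)) h1
          (by positivity) (by norm_num)
      _ = 1 := by norm_num
  · have : r₁ * (1 - r₀) = 0 := by rw [mul_sub, hmul', mul_one, sub_self]
    rw [← mul_assoc, ← mul_assoc, this, zero_mul, zero_mul]
  · have : (1 - r₀) * r₁ = 0 := by rw [sub_mul, hmul, one_mul, sub_self]
    rw [mul_assoc, this, mul_zero]
  · have key : x - (1 - r₀) * x * (1 - r₀) = x * r₀ + r₀ * x * (1 - r₀) := by noncomm_ring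
    have h1 : ‖x * r₀‖ < ε / 2 := by
      have : x * r₀ = x * (r₀ - a * r₀) := by
        rw [mul_sub, ← mul_assoc, hxa, zero_mul, sub_zero]
      calc ‖x * r₀‖ = ‖x * (r₀ - a * r₀)‖ := by rw [this]
        _ ≤ ‖x‖ * ‖r₀ - a * r₀‖ := norm_mul_le _ _
        _ ≤ 1 * ‖r₀ - a * r₀‖ := mul_le_mul_of_nonneg_right hxnorm (norm_nonneg _)
        _ = ‖a * r₀ - r₀‖ := by rw [one_mul, ← norm_neg, neg_sub]
        _ < ε / 2 := har
    have h2 : ‖r₀ * x * (1 - r₀)‖ < ε / 2 := by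
      have hrx : r₀ * x = (r₀ - r₀ * a) * x := by
        rw [sub_mul, mul_assoc, hax, mul_zero, sub_zero]
      have hnorm : ‖r₀ - r₀ * a‖ = ‖a * r₀ - r₀‖ := by
        rw [← norm_star (a * r₀ - r₀), star_sub, star_mul, hr₀sa.star_eq, hasa.star_eq,
          ← norm_neg, neg_sub]
      have h1' : ‖(1 : A) - r₀‖ ≤ 1 := by
        rw [CStarAlgebra.norm_le_one_iff_of_nonneg _ (by simpa using hr₀1)]
        simpa using hr₀
      calc ‖r₀ * x * (1 - r₀)‖ ≤ ‖r₀ * x‖ * ‖(1 : A) - r₀‖ := norm_mul_le _ _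
        _ ≤ ‖r₀ * x‖ * 1 := mul_le_mul_of_nonneg_left h1' (norm_nonneg _)
        _ = ‖(r₀ - r₀ * a) * x‖ := by rw [mul_one, hrx]
        _ ≤ ‖r₀ - r₀ * a‖ * ‖x‖ := norm_mul_le _ _
        _ ≤ ‖r₀ - r₀ * a‖ * 1 := mul_le_mul_of_nonneg_left hxnorm (norm_nonneg _)
        _ = ‖a * r₀ - r₀‖ := by rw [mul_one, hnorm]
        _ < ε / 2 := har
    calc ‖x - (1 - r₀) * x * (1 - r₀)‖ = ‖x * r₀ + r₀ * x * (1 - r₀)‖ := by rw [key]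
      _ ≤ ‖x * r₀‖ + ‖r₀ * x * (1 - r₀)‖ := norm_add_le _ _
      _ < ε / 2 + ε / 2 := add_lt_add h1 h2
      _ = ε := by ring
end

section
/- Let A be an infinite dimensional simple unital C*-algebra and B ⊆ A a large subalgebra. For every ε > 0, every self-adjoint x ∈ A with ‖x‖ ≤ 1, and every nonzero positive a ∈ A with ax = xa = 0, there exist a self-adjoint y ∈ A with ‖y‖ ≤ 1 and a nonzero positive b ∈ B such that ‖x - y‖ < ε and by = yb = 0. -/
open Filter Topology

/-- Cuntz subequivalence witnessed inside a subset `S`. -/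
def CuntzSubeqIn {R : Type*} [Mul R] [Star R] [TopologicalSpace R]
    (S : Set R) (a b : R) : Prop :=
  ∃ v : ℕ → R, (∀ n, v n ∈ S) ∧ Tendsto (fun n => v n * b * star (v n)) atTop (𝓝 a)

/-- Topological simplicity of a C*-algebra: the only closed two-sided ideals are
`⊥` and `⊤`. -/
def CStarSimple (A : Type*) [CStarAlgebra A] : Prop :=
  ∀ I : TwoSidedIdeal A, IsClosed (I : Set A) → I = ⊥ ∨ I = ⊤

variable {A : Type*} [CStarAlgebra A] [PartialOrder A] [StarOrderedRing A]

/-- Phillips' notion of a large subalgebra of a unital C*-algebra. -/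
structure IsLargeSubalgebra (B : StarSubalgebra ℂ A) : Prop where
  closed : IsClosed (B : Set A)
  approx : ∀ (m : ℕ) (a : Fin m → A) (ε : ℝ), 0 < ε →
    ∀ x : A, 0 ≤ x → ‖x‖ = 1 →
    ∀ y : A, y ∈ B → 0 ≤ y → y ≠ 0 →
    ∃ (c : Fin m → A) (g : A), g ∈ B ∧ 0 ≤ g ∧ g ≤ 1 ∧
      (∀ j, ‖c j - a j‖ < ε) ∧ (∀ j, (1 - g) * c j ∈ B) ∧
      CuntzSubeqIn (B : Set A) g y ∧ CuntzSubeq g x ∧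
      ‖(1 - g) * x * (1 - g)‖ > 1 - ε

/-- A centrally large subalgebra (Archey–Phillips): large, with the cut-down element `g`
almost commuting with the given finite set. -/
structure IsCentrallyLargeSubalgebra (B : StarSubalgebra ℂ A) : Prop where
  closed : IsClosed (B : Set A)
  approx : ∀ (m : ℕ) (a : Fin m → A) (ε : ℝ), 0 < ε →
    ∀ x : A, 0 ≤ x → ‖x‖ = 1 →
    ∀ y : A, y ∈ B → 0 ≤ y → y ≠ 0 →
    ∃ (c : Fin m → A) (g : A), g ∈ B ∧ 0 ≤ g ∧ g ≤ 1 ∧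
      (∀ j, ‖c j - a j‖ < ε) ∧ (∀ j, (1 - g) * c j ∈ B) ∧
      CuntzSubeqIn (B : Set A) g y ∧ CuntzSubeq g x ∧
      ‖(1 - g) * x * (1 - g)‖ > 1 - ε ∧
      (∀ j, ‖g * a j - a j * g‖ < ε)

open Polynomial in
/-- A closed star subalgebra of a C*-algebra is stable under the (real) continuous
functional calculus applied to its selfadjoint elements. -/
theorem cfc_mem_closed_starSubalgebra' {A : Type*} [CStarAlgebra A]
    (B : StarSubalgebra ℂ A) (hcl : IsClosed (B : Set A)) {b : A} (hb : b ∈ B)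
    (hsa : IsSelfAdjoint b) (f : ℝ → ℝ) (hf : ContinuousOn f (spectrum ℝ b)) :
    cfc f b ∈ B := by
  have haev : ∀ q : ℝ[X], aeval (R := ℝ) b q ∈ B := by
    intro q
    induction q using Polynomial.induction_on with
    | C r =>
        simpa [aeval_C, IsScalarTower.algebraMap_apply ℝ ℂ A r] using
          B.algebraMap_mem (algebraMap ℝ ℂ r)
    | add p q hp hq => simpa using B.add_mem hp hq
    | monomial n r h =>
        have : aeval (R := ℝ) b (C r * X ^ (n + 1)) = algebraMap ℝ A r * b ^ (n + 1) := by
          simp [aeval_C]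
        rw [this, IsScalarTower.algebraMap_apply ℝ ℂ A r]
        exact B.mul_mem (B.algebraMap_mem _) (B.pow_mem hb _)
  have key : ∀ g : C(spectrum ℝ b, ℝ), cfcHom hsa (R := ℝ) g ∈ B := by
    intro g
    have hS : IsClosed ((cfcHom hsa (R := ℝ)) ⁻¹' (B : Set A)) :=
      hcl.preimage (cfcHom_isClosedEmbedding hsa).continuous
    have hdense := polynomialFunctions.topologicalClosure (spectrum ℝ b)
    have hg : g ∈ (polynomialFunctions (spectrum ℝ b)).topologicalClosure := by
      rw [hdense]; trivial
    have hsub : (polynomialFunctions (spectrum ℝ b) : Set C(spectrum ℝ b, ℝ)) ⊆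
        (cfcHom hsa (R := ℝ)) ⁻¹' (B : Set A) := by
      intro p hp
      rw [polynomialFunctions_coe] at hp
      obtain ⟨q, rfl⟩ := hp
      have h1 : (Polynomial.toContinuousMapOnAlgHom (spectrum ℝ b) q) =
          (⟨_, (((Polynomial.continuous q).continuousOn (s := spectrum ℝ b))).restrict⟩ :
            C(spectrum ℝ b, ℝ)) := by
        ext x; rfl
      show cfcHom hsa (R := ℝ) _ ∈ (B : Set A)
      rw [h1, ← cfc_apply (R := ℝ) q.eval b hsa, cfc_polynomial q b hsa]
      exact haev q
    exact closure_minimal hsub hS hg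
  rw [cfc_apply f b hsa hf]
  exact key _

/-- Let `A` be an infinite dimensional simple unital C*-algebra and `B ⊆ A` a large
subalgebra.  For every `ε > 0`, every self-adjoint contraction `x ∈ A`, and every
nonzero positive `a ∈ A` with `a x = x a = 0`, there are a self-adjoint contraction
`y ∈ A` and a nonzero positive `b ∈ B` with `‖x - y‖ < ε` and `b y = y b = 0`. -/
theorem exists_selfAdjoint_orthogonal_to_large {A : Type*} [CStarAlgebra A]
    [PartialOrder A] [StarOrderedRing A] (hdim : ¬ FiniteDimensional ℂ A)
    (hsimple : CStarSimple A) (B : StarSubalgebra ℂ A) (hB : IsLargeSubalgebra B)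
    (ε : ℝ) (hε : 0 < ε) (x : A) (hx : IsSelfAdjoint x) (hxnorm : ‖x‖ ≤ 1)
    (a : A) (ha : 0 ≤ a) (ha0 : a ≠ 0) (hax : a * x = 0) (hxa : x * a = 0) :
    ∃ y b : A, IsSelfAdjoint y ∧ ‖y‖ ≤ 1 ∧ b ∈ B ∧ 0 ≤ b ∧ b ≠ 0 ∧
      ‖x - y‖ < ε ∧ b * y = 0 ∧ y * b = 0 := by
  have hnt : Nontrivial A := by
    by_contra h
    rw [not_nontrivial_iff_subsingleton] at h
    exact hdim inferInstance
  -- the basic tolerance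
  set δ : ℝ := min (ε / 10) (1 / 8) with hδdef
  have hδpos : 0 < δ := lt_min (by positivity) (by norm_num)
  have hδ8 : δ ≤ 1 / 8 := min_le_right _ _
  have hδε : δ ≤ ε / 10 := min_le_left _ _
  -- normalize `a`
  set a₁ : A := ‖a‖⁻¹ • a with ha₁def
  have hna : ‖a‖ ≠ 0 := norm_ne_zero_iff.mpr ha0
  have ha₁pos : (0 : A) ≤ a₁ := smul_nonneg (by positivity) ha
  have hna₁ : ‖a₁‖ = 1 := by
    rw [ha₁def, norm_smul, norm_inv, norm_norm, inv_mul_cancel₀ hna]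
  have ha₁x : a₁ * x = 0 := by rw [ha₁def, smul_mul_assoc, hax, smul_zero]
  -- apply the large subalgebra property to the singleton `{a₁}`, cut-down element `a₁`
  obtain ⟨c, g, hgB, hg0, hg1, hc, hcB, -, -, hgnorm⟩ :=
    hB.approx 1 ![a₁] δ hδpos a₁ ha₁pos hna₁ 1 B.one_mem zero_le_one one_ne_zero
  have hc0 : ‖c 0 - a₁‖ < δ := by simpa using hc 0
  set β : A := (1 - g) * c 0 with hβdef
  have hβB : β ∈ B := hcB 0
  have h1g : ‖1 - g‖ ≤ 1 := by
    rw [CStarAlgebra.norm_le_one_iff_of_nonneg _ (sub_nonneg.mpr hg1)]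
    exact sub_le_self _ hg0
  have hβx : ‖β * x‖ ≤ δ := by
    have h1 : β * x = (1 - g) * ((c 0 - a₁) * x) := by
      rw [hβdef, mul_assoc]
      congr 1
      rw [sub_mul, ha₁x, sub_zero]
    rw [h1]
    calc ‖(1 - g) * ((c 0 - a₁) * x)‖ ≤ ‖1 - g‖ * (‖c 0 - a₁‖ * ‖x‖) :=
          (norm_mul_le _ _).trans (by gcongr; exact norm_mul_le _ _)
      _ ≤ 1 * (δ * 1) := by
          have h8 : ‖c 0 - a₁‖ * ‖x‖ ≤ δ * 1 :=
            mul_le_mul hc0.le hxnorm (norm_nonneg x) hδpos.le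
          exact mul_le_mul h1g h8 (by positivity) zero_le_one
      _ = δ := by ring
  have hβhigh : ‖β‖ ≤ 1 + δ := by
    calc ‖β‖ ≤ ‖1 - g‖ * ‖c 0‖ := norm_mul_le _ _
      _ ≤ 1 * ‖c 0‖ := by gcongr
      _ = ‖c 0‖ := one_mul _
      _ ≤ ‖a₁‖ + ‖c 0 - a₁‖ := by
          simpa using norm_add_le a₁ (c 0 - a₁) |>.trans_eq' (by rw [add_sub_cancel])
      _ ≤ 1 + δ := by rw [hna₁]; linarith
  have hβlow : 1 - 2 * δ < ‖β‖ := by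
    have h2 : ‖(1 - g) * a₁ * (1 - g)‖ ≤ ‖(1 - g) * a₁‖ := by
      calc ‖(1 - g) * a₁ * (1 - g)‖ ≤ ‖(1 - g) * a₁‖ * ‖1 - g‖ := norm_mul_le _ _
        _ ≤ ‖(1 - g) * a₁‖ * 1 := by gcongr
        _ = _ := mul_one _
    have h3 : ‖(1 - g) * a₁‖ ≤ ‖β‖ + δ := by
      have : (1 - g) * a₁ = β - (1 - g) * (c 0 - a₁) := by
        rw [hβdef, mul_sub, sub_sub_cancel]
      rw [this]
      calc ‖β - (1 - g) * (c 0 - a₁)‖ ≤ ‖β‖ + ‖(1 - g) * (c 0 - a₁)‖ := norm_sub_le _ _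
        _ ≤ ‖β‖ + ‖1 - g‖ * ‖c 0 - a₁‖ := by gcongr; exact norm_mul_le _ _
        _ ≤ ‖β‖ + δ := by
            have h4 := norm_nonneg (c 0 - a₁); have h6 := norm_nonneg (1 - g); nlinarith
    linarith
  -- the positive element `b₀ ∈ B` with small product against `x`
  set b₀ : A := star β * β with hb₀def
  have hb₀B : b₀ ∈ B := mul_mem (star_mem hβB) hβB
  have hb₀pos : (0 : A) ≤ b₀ := star_mul_self_nonneg β
  have hb₀sa : IsSelfAdjoint b₀ := IsSelfAdjoint.star_mul_self β
  have hb₀norm : 9 / 16 < ‖b₀‖ := by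
    rw [hb₀def, CStarRing.norm_star_mul_self]
    nlinarith [norm_nonneg β]
  have hb₀x : ‖b₀ * x‖ ≤ (1 + δ) * δ := by
    have h1 : b₀ * x = star β * (β * x) := by rw [hb₀def, mul_assoc]
    rw [h1]
    calc ‖star β * (β * x)‖ ≤ ‖star β‖ * ‖β * x‖ := norm_mul_le _ _
      _ = ‖β‖ * ‖β * x‖ := by rw [norm_star]
      _ ≤ (1 + δ) * δ := mul_le_mul hβhigh hβx (norm_nonneg _) (by linarith)
  -- functional calculus cut-down functions
  set k : ℝ → ℝ := fun t => max (t - 1/2) 0 with hkdef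
  set p : ℝ → ℝ := fun t => min 1 (4 * max (t - 1/4) 0) with hpdef
  set m : ℝ → ℝ := fun t => 1 - p t with hmdef
  set q : ℝ → ℝ := fun t => p t / max t (1/4) with hqdef
  have hkc : Continuous k := by fun_prop
  have hpc : Continuous p := by fun_prop
  have hmc : Continuous m := by fun_prop
  have hqc : Continuous q := by
    apply hpc.div (by fun_prop)
    intro t
    exact (lt_of_lt_of_le (by norm_num) (le_max_right t (1/4))).ne'
  have hp0 : ∀ t, 0 ≤ p t := fun t => le_min zero_le_one (by positivity)
  have hp1 : ∀ t, p t ≤ 1 := fun t => min_le_left _ _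
  have hkm0 : ∀ t, k t * m t = 0 := by
    intro t
    rcases le_or_gt t (1/2) with ht | ht
    · have : k t = 0 := max_eq_right (by linarith)
      rw [this, zero_mul]
    · have h1 : (1:ℝ) ≤ 4 * max (t - 1/4) 0 := by
        rw [max_eq_left (by linarith)]; linarith
      have : m t = 0 := by
        rw [hmdef]; simp only; rw [hpdef]; simp only [min_eq_left h1]; ring
      rw [this, mul_zero]
  have hpq : ∀ t, 0 ≤ t → p t = q t * t := by
    intro t ht
    rcases le_or_gt t (1/4) with ht4 | ht4
    · have hp : p t = 0 := by
        rw [hpdef]; simp only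
        rw [max_eq_right (by linarith), mul_zero, min_eq_right zero_le_one]
      rw [hp, hqdef]; simp only; rw [hp, zero_div, zero_mul]
    · have hmax : max t (1/4) = t := max_eq_left ht4.le
      rw [hqdef]; simp only [hmax]
      rw [div_mul_cancel₀ _ (by linarith : t ≠ 0)]
  -- the cut-down elements
  set M : A := cfc m b₀ with hMdef
  set K : A := cfc k b₀ with hKdef
  set Q : A := cfc q b₀ with hQdef
  have hMsa : IsSelfAdjoint M := cfc_predicate m b₀
  have hKM : K * M = 0 := by
    rw [hKdef, hMdef, ← cfc_mul k m b₀ hkc.continuousOn hmc.continuousOn]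
    calc cfc (fun t => k t * m t) b₀ = cfc (0 : ℝ → ℝ) b₀ :=
          cfc_congr (fun t _ => hkm0 t)
      _ = 0 := by rw [cfc_zero]
  have hMK : M * K = 0 := by
    rw [hKdef, hMdef, ← cfc_mul m k b₀ hmc.continuousOn hkc.continuousOn]
    calc cfc (fun t => m t * k t) b₀ = cfc (0 : ℝ → ℝ) b₀ :=
          cfc_congr (fun t _ => by rw [mul_comm]; exact hkm0 t)
      _ = 0 := by rw [cfc_zero]
  have hcomp : (1 : A) - M = Q * b₀ := by
    have h1 : (1 : A) - M = cfc p b₀ := by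
      have hs := cfc_sub (R := ℝ) (fun _ => (1:ℝ)) m b₀ (by fun_prop) hmc.continuousOn
      have hone : cfc (fun _ : ℝ => (1:ℝ)) b₀ = 1 := cfc_one ℝ b₀ hb₀sa
      rw [hone] at hs
      rw [hMdef, ← hs]
      exact (cfc_congr (fun t _ => by rw [hmdef]; simp only; ring)).symm
    have h2 : cfc p b₀ = Q * b₀ := by
      have h3 : cfc p b₀ = cfc (fun t => q t * t) b₀ :=
        cfc_congr (fun t ht => hpq t (spectrum_nonneg_of_nonneg hb₀pos ht))
      rw [h3, cfc_mul q (fun t => t) b₀ hqc.continuousOn (by fun_prop), cfc_id' ℝ b₀]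
    rw [h1, h2]
  have hQ4 : ‖Q‖ ≤ 4 := by
    apply norm_cfc_le (by norm_num)
    intro t ht
    have ht0 : 0 ≤ t := spectrum_nonneg_of_nonneg hb₀pos ht
    have h1 : (0:ℝ) < max t (1/4) := lt_of_lt_of_le (by norm_num) (le_max_right _ _)
    rw [Real.norm_eq_abs, hqdef]
    simp only
    rw [abs_div, abs_of_nonneg (hp0 t), abs_of_pos h1, div_le_iff₀ h1]
    calc p t ≤ 1 := hp1 t
      _ ≤ 4 * (1/4) := by norm_num
      _ ≤ 4 * max t (1/4) := by gcongr; exact le_max_right _ _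
  have hM1 : ‖M‖ ≤ 1 := by
    apply norm_cfc_le zero_le_one
    intro t ht
    rw [Real.norm_eq_abs, abs_le]
    constructor
    · have := hp1 t; rw [hmdef]; simp only; linarith
    · have := hp0 t; rw [hmdef]; simp only; linarith
  have hK0 : 0 ≤ K := cfc_nonneg (fun t _ => le_max_right _ _)
  have hKB : K ∈ B := cfc_mem_closed_starSubalgebra' B hB.closed hb₀B hb₀sa k hkc.continuousOn
  have hKne : K ≠ 0 := by
    have hs : ‖b₀‖ ∈ spectrum ℝ b₀ := CStarAlgebra.norm_mem_spectrum_of_nonneg hb₀pos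
    have h1 : ‖k ‖b₀‖‖ ≤ ‖K‖ :=
      norm_apply_le_norm_cfc (𝕜 := ℝ) k b₀ hs hkc.continuousOn hb₀sa
    have h2 : (0:ℝ) < k ‖b₀‖ := by
      rw [hkdef]; simp only
      rw [max_eq_left (by linarith)]; linarith
    intro hzero
    rw [hzero, norm_zero] at h1
    rw [Real.norm_eq_abs, abs_of_pos h2] at h1
    linarith
  -- the perturbed element `y`
  set y : A := M * x * M with hydef
  have h1Msa : IsSelfAdjoint ((1:A) - M) := (IsSelfAdjoint.one (R := A)).sub hMsa
  have h1Mx : ‖((1:A) - M) * x‖ ≤ 4 * ((1 + δ) * δ) := by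
    rw [hcomp, mul_assoc]
    calc ‖Q * (b₀ * x)‖ ≤ ‖Q‖ * ‖b₀ * x‖ := norm_mul_le _ _
      _ ≤ 4 * ((1 + δ) * δ) := mul_le_mul hQ4 hb₀x (norm_nonneg _) (by norm_num)
  have hx1M : ‖x * ((1:A) - M)‖ = ‖((1:A) - M) * x‖ := by
    conv_lhs => rw [show x * ((1:A) - M) = star (((1:A) - M) * x) by
      rw [star_mul, h1Msa.star_eq, hx.star_eq]]
    rw [norm_star]
  refine ⟨y, K, ?_, ?_, hKB, hK0, hKne, ?_, ?_, ?_⟩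
  · rw [hydef]
    have := hx.conjugate M
    rwa [hMsa.star_eq] at this
  · calc ‖M * x * M‖ ≤ ‖M * x‖ * ‖M‖ := norm_mul_le _ _
      _ ≤ ‖M‖ * ‖x‖ * ‖M‖ := by gcongr; exact norm_mul_le _ _
      _ ≤ 1 * 1 * 1 := by
          have := norm_nonneg M; have := norm_nonneg x
          gcongr
      _ = 1 := by norm_num
  · have hdecomp : x - y = ((1:A) - M) * x + M * (x * ((1:A) - M)) := by
      rw [hydef]; noncomm_ring
    have hbound : ‖x - y‖ ≤ 8 * ((1 + δ) * δ) := by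
      rw [hdecomp]
      calc ‖((1:A) - M) * x + M * (x * ((1:A) - M))‖
          ≤ ‖((1:A) - M) * x‖ + ‖M * (x * ((1:A) - M))‖ := norm_add_le _ _
        _ ≤ 4 * ((1 + δ) * δ) + ‖M‖ * ‖x * ((1:A) - M)‖ := by gcongr; exact norm_mul_le _ _
        _ ≤ 4 * ((1 + δ) * δ) + 1 * (4 * ((1 + δ) * δ)) := by
            have h9 : ‖M‖ * ‖x * ((1:A) - M)‖ ≤ 1 * (4 * ((1 + δ) * δ)) := by
              apply mul_le_mul hM1 _ (norm_nonneg _) zero_le_one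
              rw [hx1M]; exact h1Mx
            linarith
        _ = 8 * ((1 + δ) * δ) := by ring
    have : 8 * ((1 + δ) * δ) < ε := by nlinarith
    linarith
  · rw [hydef, ← mul_assoc, ← mul_assoc, hKM, zero_mul, zero_mul]
  · rw [hydef, mul_assoc, hMK, mul_zero]
end

section
/- Let A be an infinite dimensional simple unital C*-algebra and B ⊆ A a centrally large subalgebra, and let p ∈ B be a projection. Then for any finite families p a₁ p, …, p aₘ p ∈ pAp, p b₁ p, …, p bₙ p ∈ (pAp)₊, any ε > 0, any positive x ∈ pAp with ‖x‖ = 1, and any nonzero positive y ∈ pBp, there exist c₁,…,cₘ ∈ pBp, positive d₁,…,dₙ ∈ pBp, and g ∈ pBp with: 0 ≤ g ≤ 1; ‖(p-g)(p aⱼ p) - cⱼ‖ < ε and ‖(p-g)(p bᵢ p)(p-g) - dᵢ‖ < ε; g ≲_{pBp} y and g ≲_{pAp} x; ‖(p-g)x(p-g)‖ > 1 - ε; and ‖g(p aⱼ p) - (p aⱼ p)g‖ < ε, ‖g(p bᵢ p) - (p bᵢ p)g‖ < ε. -/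
/-!
Apply central largeness of `B` in `A`, with a small tolerance `δ`, to the compressed elements
`p aⱼ p`, `p bᵢ p`, the square roots `sᵢ` of the `p bᵢ p`, and `p` itself, obtaining `g'` and
approximants `c'`; then take `g = p g' p`. Since `p - g = p (1 - g') p`, every estimate for `g'`
survives compression by `p`. Positive approximants of `(p - g) p bᵢ p (p - g)` are obtained as
`p (1 - g') c' c'* (1 - g') p` with `c' ≈ sᵢ`. Because `x` and `y` lie in the corner, Cuntz
subequivalences compress as well, and since `g'` almost commutes with `p`,
`(p - g) x (p - g)` is close to `(1 - g') x (1 - g')`.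
-/

open Filter Topology

variable {A : Type*} [CStarAlgebra A] [PartialOrder A] [StarOrderedRing A]

section CuntzSubeq

variable {R : Type*} [Semigroup R] [StarMul R] [TopologicalSpace R]

theorem CuntzSubeq.cuntzSubeqIn_univ {a b : R} (h : CuntzSubeq a b) :
    CuntzSubeqIn Set.univ a b :=
  let ⟨v, hv⟩ := h
  ⟨v, fun _ => trivial, hv⟩

theorem CuntzSubeqIn.mul_mul_of_eq [ContinuousMul R] {S T : Set R} {p a y : R}
    (hp : IsSelfAdjoint p) (hy : y = p * y * p) (hST : ∀ v ∈ S, p * v * p ∈ T)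
    (h : CuntzSubeqIn S a y) : CuntzSubeqIn T (p * a * p) y := by
  obtain ⟨v, hvS, hv⟩ := h
  refine ⟨fun k => p * v k * p, fun k => hST _ (hvS k), ?_⟩
  have hconj : ∀ k, p * v k * p * y * star (p * v k * p) = p * (v k * y * star (v k)) * p := by
    intro k
    conv_rhs => rw [hy]
    simp only [star_mul, hp.star_eq, mul_assoc]
  simp_rw [hconj]
  exact (hv.const_mul p).mul_const p

end CuntzSubeq

theorem IsIdempotentElem.mul_corner_mul {R : Type*} [Semigroup R] {p : R}
    (hp : IsIdempotentElem p) (z : R) : p * (p * z * p) * p = p * z * p := by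
  simp only [mul_assoc, hp.eq, hp.mul_self_mul]

section NormedRing

variable {R : Type*} [NormedRing R] {p u : R}

theorem norm_mul_mul_le_of_norm_le_one {a b : R} (ha : ‖a‖ ≤ 1) (hb : ‖b‖ ≤ 1) (z : R) :
    ‖a * z * b‖ ≤ ‖z‖ :=
  (norm_mul_le_of_le (norm_mul_le_of_le ha le_rfl) hb).trans_eq (by ring)

theorem norm_mul_le_one {a b : R} (ha : ‖a‖ ≤ 1) (hb : ‖b‖ ≤ 1) : ‖a * b‖ ≤ 1 :=
  (norm_mul_le_of_le ha hb).trans_eq (one_mul 1)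

variable (hp : IsIdempotentElem p) (hpn : ‖p‖ ≤ 1)
include hp hpn

theorem norm_corner_commutator_le (g z : R) :
    ‖p * g * p * (p * z * p) - p * z * p * (p * g * p)‖
      ≤ ‖g * (p * z * p) - p * z * p * g‖ := by
  have h : p * g * p * (p * z * p) - p * z * p * (p * g * p)
      = p * (g * (p * z * p) - p * z * p * g) * p := by
    simp only [mul_sub, sub_mul, mul_assoc, hp.eq, hp.mul_self_mul]
  rw [h]
  exact norm_mul_mul_le_of_norm_le_one hpn hpn _

variable (hu : ‖u‖ ≤ 1)
include hu

theorem norm_corner_mul_sub_le (z c : R) :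
    ‖p * u * p * (p * z * p) - p * (u * c) * p‖ ≤ ‖p * z * p - c‖ := by
  have h : p * u * p * (p * z * p) - p * (u * c) * p = p * u * (p * z * p - c) * p := by
    simp only [mul_sub, sub_mul, mul_assoc, hp.eq, hp.mul_self_mul]
  rw [h]
  exact norm_mul_mul_le_of_norm_le_one (norm_mul_le_one hpn hu) hpn _

theorem norm_corner_conj_sub_le [StarRing R] (hu_sa : IsSelfAdjoint u) (z c : R) :
    ‖p * u * p * (p * z * p) * (p * u * p) - p * (u * c * star (u * c)) * p‖
      ≤ ‖p * z * p - c * star c‖ := by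
  have h : p * u * p * (p * z * p) * (p * u * p) - p * (u * c * star (u * c)) * p
      = p * u * (p * z * p - c * star c) * (u * p) := by
    simp only [star_mul, hu_sa.star_eq, mul_sub, sub_mul, mul_assoc, hp.mul_self_mul]
  rw [h]
  exact norm_mul_mul_le_of_norm_le_one (norm_mul_le_one hpn hu) (norm_mul_le_one hu hpn) _

theorem norm_corner_conj_sub_conj_le {x : R} (hx : x = p * x * p) (hxn : ‖x‖ ≤ 1) :
    ‖p * u * p * x * (p * u * p) - u * x * u‖ ≤ 2 * ‖p * u - u * p‖ := by
  have hup : ‖u * p‖ ≤ 1 := norm_mul_le_one hu hpn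
  have h : p * u * p * x * (p * u * p) - u * x * u
      = (p * u - u * p) * x * (u * p) - u * p * x * (p * u - u * p) := by
    rw [hx]
    simp only [mul_sub, sub_mul, mul_assoc, hp.mul_self_mul]
    abel
  rw [h]
  calc _ ≤ ‖(p * u - u * p) * x * (u * p)‖ + ‖u * p * x * (p * u - u * p)‖ :=
        norm_sub_le _ _
    _ ≤ ‖p * u - u * p‖ * 1 * 1 + 1 * 1 * ‖p * u - u * p‖ := by
        gcongr <;> exact norm_mul₃_le.trans (by gcongr)
    _ = 2 * ‖p * u - u * p‖ := by ring

end NormedRing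

theorem norm_mul_star_sub_mul_star_lt {R : Type*} [NormedRing R] [StarRing R]
    [NormedStarGroup R] {s c : R} {K δ : ℝ} (hs : ‖s‖ ≤ K) (hsc : ‖s - c‖ < δ)
    (hδ : δ ≤ 1) :
    ‖s * star s - c * star c‖ < δ * (2 * K + 1) := by
  have hc : ‖c‖ ≤ K + 1 := by
    have := norm_sub_norm_le c s
    rw [norm_sub_rev] at this
    linarith
  have h : s * star s - c * star c = (s - c) * star s + c * star (s - c) := by
    rw [star_sub]
    noncomm_ring
  calc ‖s * star s - c * star c‖ ≤ ‖s - c‖ * ‖s‖ + ‖c‖ * ‖s - c‖ := by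
        rw [h]
        refine (norm_add_le _ _).trans (add_le_add ?_ ?_)
        · simpa only [norm_star] using norm_mul_le (s - c) (star s)
        · simpa only [norm_star] using norm_mul_le c (star (s - c))
    _ ≤ ‖s - c‖ * (2 * K + 1) := by nlinarith [norm_nonneg (s - c)]
    _ < δ * (2 * K + 1) := by
        have : 0 < 2 * K + 1 := by linarith [norm_nonneg s]
        gcongr

theorem IsCentrallyLargeSubalgebra.exists_approx {A : Type*} [CStarAlgebra A] [PartialOrder A]
    {B : StarSubalgebra ℂ A} (hB : IsCentrallyLargeSubalgebra B) {ι : Type*} [Finite ι]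
    (a : ι → A) {ε : ℝ} (hε : 0 < ε) {x : A} (hx : 0 ≤ x) (hxn : ‖x‖ = 1)
    {y : A} (hyB : y ∈ B) (hy : 0 ≤ y) (hy0 : y ≠ 0) :
    ∃ (c : ι → A) (g : A), g ∈ B ∧ 0 ≤ g ∧ g ≤ 1 ∧
      (∀ j, ‖c j - a j‖ < ε) ∧ (∀ j, (1 - g) * c j ∈ B) ∧
      CuntzSubeqIn (B : Set A) g y ∧ CuntzSubeq g x ∧
      ‖(1 - g) * x * (1 - g)‖ > 1 - ε ∧
      (∀ j, ‖g * a j - a j * g‖ < ε) := by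
  obtain ⟨k, ⟨e⟩⟩ := Finite.exists_equiv_fin ι
  obtain ⟨c, g, hgB, hg0, hg1, hc, hcB, hgy, hgx, hgxn, hcomm⟩ :=
    hB.approx k (a ∘ e.symm) ε hε x hx hxn y hyB hy hy0
  refine ⟨c ∘ e, g, hgB, hg0, hg1, fun j => ?_, fun j => hcB _, hgy, hgx, hgxn, fun j => ?_⟩
  · simpa using hc (e j)
  · simpa using hcomm (e j)

theorem centrallyLarge_corner_general {A : Type*} [CStarAlgebra A] [PartialOrder A]
    [StarOrderedRing A]
    (B : StarSubalgebra ℂ A) (hB : IsCentrallyLargeSubalgebra B)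
    (p : A) (hpB : p ∈ B) (hp : IsIdempotentElem p) (hpsa : IsSelfAdjoint p)
    (m n : ℕ) (a : Fin m → A) (b : Fin n → A) (hb : ∀ i, 0 ≤ p * b i * p)
    (ε : ℝ) (hε : 0 < ε)
    (x : A) (hx : 0 ≤ x) (hxp : x = p * x * p) (hxnorm : ‖x‖ = 1)
    (y : A) (hyB : y ∈ B) (hy : 0 ≤ y) (hyp : y = p * y * p) (hy0 : y ≠ 0) :
    ∃ (c : Fin m → A) (d : Fin n → A) (g : A),
      (∀ j, c j ∈ B ∧ c j = p * c j * p) ∧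
      (∀ i, d i ∈ B ∧ d i = p * d i * p ∧ 0 ≤ d i) ∧
      g ∈ B ∧ g = p * g * p ∧ 0 ≤ g ∧ g ≤ 1 ∧
      (∀ j, ‖(p - g) * (p * a j * p) - c j‖ < ε) ∧
      (∀ i, ‖(p - g) * (p * b i * p) * (p - g) - d i‖ < ε) ∧
      CuntzSubeqIn {z : A | z ∈ B ∧ z = p * z * p} g y ∧
      CuntzSubeqIn {z : A | z = p * z * p} g x ∧
      ‖(p - g) * x * (p - g)‖ > 1 - ε ∧
      (∀ j, ‖g * (p * a j * p) - (p * a j * p) * g‖ < ε) ∧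
      (∀ i, ‖g * (p * b i * p) - (p * b i * p) * g‖ < ε) := by
  have hpP : IsStarProjection p := ⟨hp, hpsa⟩
  have hpn : ‖p‖ ≤ 1 := hpP.norm_le p
  set s : Fin n → A := fun i => CFC.sqrt (p * b i * p)
  have hs : ∀ i, s i * star (s i) = p * b i * p := fun i => by
    rw [(CFC.sqrt_nonneg _).isSelfAdjoint.star_eq, CFC.sqrt_mul_sqrt_self _ (hb i)]
  obtain ⟨K, hK, hsK⟩ : ∃ K : ℝ, 1 ≤ K ∧ ∀ i, ‖s i‖ ≤ K :=
    ⟨1 + ∑ i, ‖s i‖, by simp [Finset.sum_nonneg], fun i => by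
      linarith [Finset.single_le_sum (fun i _ => norm_nonneg (s i)) (Finset.mem_univ i)]⟩
  -- `δ (2K + 1) ≤ ε` absorbs the error of `sᵢ sᵢ* ≈ c' c'*`; as `K ≥ 1` it also gives `3δ ≤ ε`.
  obtain ⟨δ, hδ, hδ1, hδε⟩ : ∃ δ : ℝ, 0 < δ ∧ δ ≤ 1 ∧ δ * (2 * K + 1) ≤ ε :=
    ⟨min 1 (ε / (2 * K + 1)), by positivity, min_le_left _ _,
      (le_div_iff₀ (by positivity)).mp (min_le_right _ _)⟩
  have h3δ : 3 * δ ≤ ε := by nlinarith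
  obtain ⟨c', g', hgB, hg0, hg1, hc, hcB, hgy, hgx, hgxn, hcomm⟩ := hB.exists_approx
    (Sum.elim (fun j => p * a j * p)
      (Sum.elim (fun i => p * b i * p) (Sum.elim s fun _ : Unit => p))) hδ hx hxnorm hyB hy hy0
  set u := 1 - g'
  have hu : ‖u‖ ≤ 1 :=
    (CStarAlgebra.norm_le_one_iff_of_nonneg _ (sub_nonneg.mpr hg1)).mpr (sub_le_self 1 hg0)
  have hpg : p - p * g' * p = p * u * p := by simp only [u, mul_sub, sub_mul, mul_one, hp.eq]
  have hδε' : δ ≤ ε := by linarith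
  refine ⟨fun j => p * (u * c' (.inl j)) * p,
    fun i => p * (u * c' (.inr (.inr (.inl i))) * star (u * c' (.inr (.inr (.inl i))))) * p,
    p * g' * p, fun j => ⟨mul_mem (mul_mem hpB (hcB _)) hpB, (hp.mul_corner_mul _).symm⟩,
    fun i => ⟨mul_mem (mul_mem hpB (mul_mem (hcB _) (star_mem (hcB _)))) hpB,
      (hp.mul_corner_mul _).symm, hpsa.conjugate_nonneg (mul_star_self_nonneg _)⟩,
    mul_mem (mul_mem hpB hgB) hpB, (hp.mul_corner_mul g').symm, hpsa.conjugate_nonneg hg0,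
    (hpsa.conjugate_le_conjugate hg1).trans (by rw [mul_one, hp.eq]; exact hpP.le_one),
    fun j => ?_, fun i => ?_,
    hgy.mul_mul_of_eq hpsa hyp fun v hv =>
      ⟨mul_mem (mul_mem hpB hv) hpB, (hp.mul_corner_mul v).symm⟩,
    hgx.cuntzSubeqIn_univ.mul_mul_of_eq hpsa hxp fun v _ => (hp.mul_corner_mul v).symm, ?_,
    fun j => (norm_corner_commutator_le hp hpn _ _).trans_lt ((hcomm (.inl j)).trans_le hδε'),
    fun i => (norm_corner_commutator_le hp hpn _ _).trans_lt
      ((hcomm (.inr (.inl i))).trans_le hδε')⟩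
  · rw [hpg]
    refine (norm_corner_mul_sub_le hp hpn hu _ _).trans_lt ?_
    rw [norm_sub_rev]
    exact (hc (.inl j)).trans_le hδε'
  · rw [hpg]
    refine (norm_corner_conj_sub_le hp hpn hu (.of_nonneg (sub_nonneg.mpr hg1)) _ _).trans_lt ?_
    rw [← hs]
    refine (norm_mul_star_sub_mul_star_lt (hsK i) ?_ hδ1).trans_le hδε
    rw [norm_sub_rev]
    exact hc (.inr (.inr (.inl i)))
  · have hpu : ‖p * u - u * p‖ < δ :=
      calc ‖p * u - u * p‖ = ‖g' * p - p * g'‖ := by congr 1; simp only [u]; noncomm_ring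
        _ < δ := hcomm (.inr (.inr (.inr ())))
    have hclose := norm_corner_conj_sub_conj_le hp hpn hu hxp hxnorm.le
    have hrev := norm_sub_norm_le (u * x * u) (p * u * p * x * (p * u * p))
    rw [norm_sub_rev] at hrev
    rw [hpg]
    linarith

/-- The corner version of central largeness: if `B ⊆ A` is centrally large and `p ∈ B`
is a projection, the defining approximation property holds inside the corner `pAp`
relative to `pBp`. -/
theorem centrallyLarge_corner {A : Type*} [CStarAlgebra A] [PartialOrder A]
    [StarOrderedRing A] (hdim : ¬ FiniteDimensional ℂ A) (hsimple : CStarSimple A)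
    (B : StarSubalgebra ℂ A) (hB : IsCentrallyLargeSubalgebra B)
    (p : A) (hpB : p ∈ B) (hp : IsIdempotentElem p) (hpsa : IsSelfAdjoint p)
    (m n : ℕ) (a : Fin m → A) (b : Fin n → A) (hb : ∀ i, 0 ≤ p * b i * p)
    (ε : ℝ) (hε : 0 < ε)
    (x : A) (hx : 0 ≤ x) (hxp : x = p * x * p) (hxnorm : ‖x‖ = 1)
    (y : A) (hyB : y ∈ B) (hy : 0 ≤ y) (hyp : y = p * y * p) (hy0 : y ≠ 0) :
    ∃ (c : Fin m → A) (d : Fin n → A) (g : A),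
      (∀ j, c j ∈ B ∧ c j = p * c j * p) ∧
      (∀ i, d i ∈ B ∧ d i = p * d i * p ∧ 0 ≤ d i) ∧
      g ∈ B ∧ g = p * g * p ∧ 0 ≤ g ∧ g ≤ 1 ∧
      (∀ j, ‖(p - g) * (p * a j * p) - c j‖ < ε) ∧
      (∀ i, ‖(p - g) * (p * b i * p) * (p - g) - d i‖ < ε) ∧
      CuntzSubeqIn {z : A | z ∈ B ∧ z = p * z * p} g y ∧
      CuntzSubeqIn {z : A | z = p * z * p} g x ∧
      ‖(p - g) * x * (p - g)‖ > 1 - ε ∧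
      (∀ j, ‖g * (p * a j * p) - (p * a j * p) * g‖ < ε) ∧
      (∀ i, ‖g * (p * b i * p) - (p * b i * p) * g‖ < ε) :=
  centrallyLarge_corner_general B hB p hpB hp hpsa m n a b hb ε hε x hx hxp hxnorm y hyB hy hyp hy0
end
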